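/- arXiv:2403.03722 — 8 statements merged into one kernel-verified Lean document; each statement's English description precedes it below -/
import Mathlib

section
/- For 0 < α ≤ 1 and a real random variable X with finite variance, Var(|X-s|^α) ≤ (1 + 2Var(X))/2 for every real s; in particular Var(|X-s|^α) is bounded uniformly in s. -/
open MeasureTheory ProbabilityTheory

/-- Subadditivity of `x ↦ x ^ α` on nonnegative reals for `0 < α ≤ 1`. -/
lemma aux_rpow_add_le {α : ℝ} (hα0 : 0 < α) (hα1 : α ≤ 1) {a b : ℝ}
    (ha : 0 ≤ a) (hb : 0 ≤ b) : (a + b) ^ α ≤ a ^ α + b ^ α := by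
  have h := NNReal.rpow_add_le_add_rpow a.toNNReal b.toNNReal hα0.le hα1
  have h' := NNReal.coe_le_coe.mpr h
  push_cast [Real.coe_toNNReal _ ha, Real.coe_toNNReal _ hb] at h'
  exact h'

/-- For `0 ≤ b ≤ a`, `a^α - b^α ≤ (a-b)^α`. -/
lemma aux_rpow_sub {α : ℝ} (hα0 : 0 < α) (hα1 : α ≤ 1) {a b : ℝ}
    (hb : 0 ≤ b) (hab : b ≤ a) : a ^ α - b ^ α ≤ (a - b) ^ α := by
  have h : a ^ α ≤ (a - b) ^ α + b ^ α := by
    have := aux_rpow_add_le hα0 hα1 (sub_nonneg.mpr hab) hb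
    rwa [sub_add_cancel] at this
  linarith

/-- `||a|^α - |b|^α| ≤ |a - b|^α` for `0 < α ≤ 1`. -/
lemma aux_abs_rpow_sub_abs_rpow {α : ℝ} (hα0 : 0 < α) (hα1 : α ≤ 1) (a b : ℝ) :
    |(|a| ^ α - |b| ^ α)| ≤ |a - b| ^ α := by
  have key : ∀ x y : ℝ, |x| ^ α - |y| ^ α ≤ |x - y| ^ α := by
    intro x y
    rcases le_total |x| |y| with h | h
    · have : |x| ^ α ≤ |y| ^ α := Real.rpow_le_rpow (abs_nonneg _) h hα0.le
      have : |x| ^ α - |y| ^ α ≤ 0 := by linarith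
      exact this.trans (Real.rpow_nonneg (abs_nonneg _) _)
    · calc |x| ^ α - |y| ^ α ≤ (|x| - |y|) ^ α :=
            aux_rpow_sub hα0 hα1 (abs_nonneg _) h
        _ ≤ |x - y| ^ α :=
            Real.rpow_le_rpow (sub_nonneg.mpr h) (abs_sub_abs_le_abs_sub _ _) hα0.le
  rw [abs_sub_le_iff]
  refine ⟨key a b, ?_⟩
  have := key b a
  rwa [← abs_neg (b - a), neg_sub] at this

/-- Product-measure identity for twice the variance. -/
lemma aux_two_var (μ : Measure ℝ) [IsProbabilityMeasure μ] (f : ℝ → ℝ)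
    (hf : MemLp f 2 μ) :
    ∫ p : ℝ × ℝ, (f p.1 - f p.2) ^ 2 ∂(μ.prod μ) = 2 * variance f μ := by
  have hfi : Integrable f μ := hf.integrable (by norm_num)
  have hf2 : Integrable (fun x => f x ^ 2) μ :=
    (memLp_two_iff_integrable_sq hf.aestronglyMeasurable).mp hf
  have hA : Integrable (fun p : ℝ × ℝ => f p.1 ^ 2 * 1) (μ.prod μ) :=
    hf2.mul_prod (integrable_const 1)
  have hB : Integrable (fun p : ℝ × ℝ => f p.1 * f p.2) (μ.prod μ) :=
    hfi.mul_prod hfi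
  have hC : Integrable (fun p : ℝ × ℝ => (1 : ℝ) * f p.2 ^ 2) (μ.prod μ) :=
    (integrable_const 1).mul_prod hf2
  have hsplit : (fun p : ℝ × ℝ => (f p.1 - f p.2) ^ 2)
      = fun p : ℝ × ℝ => (f p.1 ^ 2 * 1 - 2 * (f p.1 * f p.2)) + 1 * f p.2 ^ 2 := by
    funext p; ring
  have hB2 : Integrable (fun p : ℝ × ℝ => 2 * (f p.1 * f p.2)) (μ.prod μ) :=
    hB.const_mul 2
  have hAB : Integrable (fun p : ℝ × ℝ => f p.1 ^ 2 * 1 - 2 * (f p.1 * f p.2))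
      (μ.prod μ) := hA.sub hB2
  rw [hsplit, integral_add hAB hC, integral_sub hA hB2,
    integral_prod_mul (fun x => f x ^ 2) (fun _ => (1 : ℝ)),
    integral_prod_mul (fun _ => (1 : ℝ)) (fun x => f x ^ 2),
    show ∫ p : ℝ × ℝ, 2 * (f p.1 * f p.2) ∂(μ.prod μ)
        = 2 * ((∫ x, f x ∂μ) * ∫ x, f x ∂μ) by
      rw [← integral_prod_mul f f, ← integral_const_mul]]
  have hvar := variance_eq_sub hf
  simp only [Pi.pow_apply] at hvar
  simp only [integral_const, measure_univ, ENNReal.toReal_one, smul_eq_mul, probReal_univ]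
  rw [hvar]
  ring

/-- For `0 < α ≤ 1`, the variance of `|X - s|^α` is bounded uniformly in `s`. -/
theorem stmt3 (μ : Measure ℝ) [IsProbabilityMeasure μ]
    (α : ℝ) (hα0 : 0 < α) (hα1 : α ≤ 1)
    (h2 : Integrable (fun x => x ^ 2) μ) (s : ℝ) :
    variance (fun x => |x - s| ^ α) μ
      ≤ (1 + 2 * variance (fun x => x) μ) / 2 := by
  set g : ℝ → ℝ := fun x => |x - s| ^ α with hg
  -- measurability
  have hgm : Measurable g :=
    ((Real.continuous_rpow_const hα0.le).comp
      ((continuous_id.sub continuous_const).abs)).measurable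
  -- X ∈ L²
  have hidℒ2 : MemLp (fun x : ℝ => x) 2 μ :=
    (memLp_two_iff_integrable_sq measurable_id.aestronglyMeasurable).mpr h2
  have hxi : Integrable (fun x : ℝ => x) μ := hidℒ2.integrable (by norm_num)
  -- (x - s)^2 is integrable
  have hxs2 : Integrable (fun x : ℝ => (x - s) ^ 2) μ := by
    have : (fun x : ℝ => (x - s) ^ 2)
        = fun x : ℝ => x ^ 2 + ((-2 * s) * x + s ^ 2) := by funext x; ring
    rw [this]
    exact h2.add ((hxi.const_mul _).add (integrable_const _))
  -- g ∈ L² : g² ≤ 1 + (x-s)²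
  have hg_sq_le : ∀ x : ℝ, g x ^ 2 ≤ 1 + (x - s) ^ 2 := by
    intro x
    have h1 : g x ^ 2 = |x - s| ^ (α * 2) := by
      rw [hg]
      rw [← Real.rpow_natCast (|x - s| ^ α) 2, ← Real.rpow_mul (abs_nonneg _)]
      norm_num
    rw [h1]
    rcases le_total |x - s| 1 with h | h
    · have : |x - s| ^ (α * 2) ≤ 1 :=
        Real.rpow_le_one (abs_nonneg _) h (by positivity)
      nlinarith [sq_nonneg (x - s)]
    · have h2' : |x - s| ^ (α * 2) ≤ |x - s| ^ (2 : ℝ) :=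
        Real.rpow_le_rpow_of_exponent_le h (by nlinarith)
      have h3 : |x - s| ^ (2 : ℝ) = (x - s) ^ 2 := by
        rw [show (2 : ℝ) = ((2 : ℕ) : ℝ) by norm_num, Real.rpow_natCast, sq_abs]
      nlinarith [h2'.trans_eq h3]
  have hdom1 : Integrable (fun x : ℝ => 1 + (x - s) ^ 2) μ :=
    (integrable_const 1).add hxs2
  have hg2i : Integrable (fun x => g x ^ 2) μ := by
    refine Integrable.mono hdom1
      (hgm.pow_const 2).aestronglyMeasurable (Filter.Eventually.of_forall fun x => ?_)
    have h0 : 0 ≤ g x := Real.rpow_nonneg (abs_nonneg _) _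
    rw [Real.norm_eq_abs, Real.norm_eq_abs, abs_of_nonneg (by positivity : (0:ℝ) ≤ g x ^ 2),
      abs_of_nonneg (by positivity : (0:ℝ) ≤ 1 + (x - s) ^ 2)]
    exact hg_sq_le x
  have hgℒ2 : MemLp g 2 μ :=
    (memLp_two_iff_integrable_sq hgm.aestronglyMeasurable).mpr hg2i
  -- the two product-integral identities
  have hId : ∫ p : ℝ × ℝ, (p.1 - p.2) ^ 2 ∂(μ.prod μ) = 2 * variance (fun x => x) μ :=
    aux_two_var μ (fun x => x) hidℒ2
  have hGd : ∫ p : ℝ × ℝ, (g p.1 - g p.2) ^ 2 ∂(μ.prod μ) = 2 * variance g μ :=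
    aux_two_var μ g hgℒ2
  -- integrability of the dominating function on the product
  have hdom : Integrable (fun p : ℝ × ℝ => 1 + (p.1 - p.2) ^ 2) (μ.prod μ) := by
    have h1 : Integrable (fun p : ℝ × ℝ => p.1 ^ 2 * 1) (μ.prod μ) :=
      h2.mul_prod (integrable_const 1)
    have h2' : Integrable (fun p : ℝ × ℝ => p.1 * p.2) (μ.prod μ) :=
      hxi.mul_prod hxi
    have h3 : Integrable (fun p : ℝ × ℝ => (1 : ℝ) * p.2 ^ 2) (μ.prod μ) :=
      (integrable_const 1).mul_prod h2
    have : (fun p : ℝ × ℝ => 1 + (p.1 - p.2) ^ 2)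
        = fun p : ℝ × ℝ => 1 + ((p.1 ^ 2 * 1 - 2 * (p.1 * p.2)) + 1 * p.2 ^ 2) := by
      funext p; ring
    rw [this]
    exact (integrable_const 1).add ((h1.sub (h2'.const_mul 2)).add h3)
  -- pointwise bound
  have hpt : ∀ p : ℝ × ℝ, (g p.1 - g p.2) ^ 2 ≤ 1 + (p.1 - p.2) ^ 2 := by
    intro p
    have h1 : |g p.1 - g p.2| ≤ |p.1 - p.2| ^ α := by
      have := aux_abs_rpow_sub_abs_rpow hα0 hα1 (p.1 - s) (p.2 - s)
      simpa [hg, sub_sub_sub_cancel_right] using this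
    have h2' : (g p.1 - g p.2) ^ 2 ≤ (|p.1 - p.2| ^ α) ^ 2 := by
      rw [← sq_abs (g p.1 - g p.2)]
      exact pow_le_pow_left₀ (abs_nonneg _) h1 2
    have h3 : (|p.1 - p.2| ^ α) ^ 2 = |p.1 - p.2| ^ (α * 2) := by
      rw [← Real.rpow_natCast (|p.1 - p.2| ^ α) 2, ← Real.rpow_mul (abs_nonneg _)]
      norm_num
    have h4 : |p.1 - p.2| ^ (α * 2) ≤ 1 + (p.1 - p.2) ^ 2 := by
      rcases le_total |p.1 - p.2| 1 with h | h
      · have : |p.1 - p.2| ^ (α * 2) ≤ 1 :=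
          Real.rpow_le_one (abs_nonneg _) h (by positivity)
        nlinarith [sq_nonneg (p.1 - p.2)]
      · have h5 : |p.1 - p.2| ^ (α * 2) ≤ |p.1 - p.2| ^ (2 : ℝ) :=
          Real.rpow_le_rpow_of_exponent_le h (by nlinarith)
        have h6 : |p.1 - p.2| ^ (2 : ℝ) = (p.1 - p.2) ^ 2 := by
          rw [show (2 : ℝ) = ((2 : ℕ) : ℝ) by norm_num, Real.rpow_natCast, sq_abs]
        nlinarith [h5.trans_eq h6]
    calc (g p.1 - g p.2) ^ 2 ≤ |p.1 - p.2| ^ (α * 2) := h3 ▸ h2'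
      _ ≤ 1 + (p.1 - p.2) ^ 2 := h4
  -- put it together
  have hineq : ∫ p : ℝ × ℝ, (g p.1 - g p.2) ^ 2 ∂(μ.prod μ)
      ≤ ∫ p : ℝ × ℝ, 1 + (p.1 - p.2) ^ 2 ∂(μ.prod μ) := by
    refine integral_mono_of_nonneg (Filter.Eventually.of_forall fun p => sq_nonneg _)
      hdom (Filter.Eventually.of_forall hpt)
  have hRHS : ∫ p : ℝ × ℝ, 1 + (p.1 - p.2) ^ 2 ∂(μ.prod μ)
      = 1 + 2 * variance (fun x => x) μ := by
    have hsub : Integrable (fun p : ℝ × ℝ => (p.1 - p.2) ^ 2) (μ.prod μ) := by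
      have : (fun p : ℝ × ℝ => (p.1 - p.2) ^ 2)
          = fun p : ℝ × ℝ => (1 + (p.1 - p.2) ^ 2) - 1 := by funext p; ring
      rw [this]
      exact hdom.sub (integrable_const 1)
    rw [integral_add (integrable_const 1) hsub, hId]
    simp
  rw [hGd] at hineq
  rw [hRHS] at hineq
  linarith
end

section
/- For 0 < α < 1 and a real random variable X with finite variance, Var(|X-s|^α) → 0 as s → ∞. -/
open MeasureTheory ProbabilityTheory Filter
open scoped NNReal ENNReal

/-- Variance is invariant under subtracting a constant. -/
lemma my_var_shift {Ω : Type*} {_m : MeasurableSpace Ω} (μ : Measure Ω) [IsProbabilityMeasure μ]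
    (X : Ω → ℝ) (c : ℝ) (hX : Integrable X μ) :
    variance (fun ω => X ω - c) μ = variance X μ := by
  have hmean : (μ[fun ω => X ω - c]) = μ[X] - c := by
    rw [integral_sub hX (integrable_const c), integral_const]
    simp
  unfold ProbabilityTheory.variance ProbabilityTheory.evariance
  congr 1
  refine lintegral_congr fun ω => ?_
  rw [hmean]
  congr 2
  ring_nf

/-- Bernoulli-type bound: `a ^ α - b ^ α ≤ α * b ^ (α - 1) * (a - b)` for `0 < b ≤ a`. -/
lemma my_rpow_sub_le {α : ℝ} (hα0 : 0 ≤ α) (hα1 : α ≤ 1) {a b : ℝ}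
    (hb : 0 < b) (hab : b ≤ a) :
    a ^ α - b ^ α ≤ α * b ^ (α - 1) * (a - b) := by
  have ha : 0 < a := hb.trans_le hab
  have hdiv : (1 : ℝ) ≤ a / b := (one_le_div hb).2 hab
  have h1 : a ^ α = b ^ α * (a / b) ^ α := by
    rw [← Real.mul_rpow hb.le (by positivity)]
    rw [mul_div_cancel₀ _ hb.ne']
  have h2 : (a / b) ^ α ≤ 1 + α * (a / b - 1) := by
    have := rpow_one_add_le_one_add_mul_self (s := a / b - 1)
      (by linarith) hα0 hα1
    simpa using this
  have hbpow : (0 : ℝ) < b ^ α := Real.rpow_pos_of_pos hb _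
  have h3 : a ^ α ≤ b ^ α + α * (b ^ α / b) * (a - b) := by
    rw [h1]
    calc b ^ α * (a / b) ^ α ≤ b ^ α * (1 + α * (a / b - 1)) := by
          exact mul_le_mul_of_nonneg_left h2 hbpow.le
      _ = b ^ α + α * (b ^ α / b) * (a - b) := by
          field_simp
  have h4 : b ^ α / b = b ^ (α - 1) := by
    rw [Real.rpow_sub hb, Real.rpow_one]
  linarith [h3, h4 ▸ h3]

/-- Subadditivity: `a ^ α - b ^ α ≤ (a - b) ^ α` for `0 ≤ b ≤ a`, `0 ≤ α ≤ 1`. -/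
lemma my_rpow_sub_rpow_le {α : ℝ} (hα0 : 0 ≤ α) (hα1 : α ≤ 1) {a b : ℝ}
    (hb : 0 ≤ b) (hab : b ≤ a) :
    a ^ α - b ^ α ≤ (a - b) ^ α := by
  have key := NNReal.rpow_add_le_add_rpow (a - b).toNNReal b.toNNReal hα0 hα1
  have hcoe : ((a - b).toNNReal + b.toNNReal : ℝ≥0) = a.toNNReal := by
    ext
    simp [Real.coe_toNNReal _ (by linarith : (0:ℝ) ≤ a - b), Real.coe_toNNReal _ hb,
      Real.coe_toNNReal _ (hb.trans hab)]
  rw [hcoe] at key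
  have := NNReal.coe_le_coe.2 key
  rw [NNReal.coe_add] at this
  simp only [NNReal.coe_rpow, Real.coe_toNNReal _ (hb.trans hab), Real.coe_toNNReal _ hb,
    Real.coe_toNNReal _ (by linarith : (0:ℝ) ≤ a - b)] at this
  linarith

/-- Pointwise convergence: `|x - s| ^ α - s ^ α → 0` as `s → ∞`. -/
lemma my_ptwise {α : ℝ} (hα0 : 0 < α) (hα1 : α < 1) (x : ℝ) :
    Tendsto (fun s : ℝ => |x - s| ^ α - s ^ α) atTop (nhds 0) := by
  have hg : Tendsto (fun s : ℝ => α * (s / 2) ^ (α - 1) * |x|) atTop (nhds 0) := by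
    have h1 : Tendsto (fun s : ℝ => (s / 2) ^ (-(1 - α))) atTop (nhds 0) :=
      (tendsto_rpow_neg_atTop (by linarith)).comp (tendsto_id.atTop_div_const two_pos)
    have h2 : Tendsto (fun s : ℝ => α * (s / 2) ^ (α - 1) * |x|) atTop
        (nhds (α * 0 * |x|)) := by
      apply Tendsto.mul_const
      apply Tendsto.const_mul
      convert h1 using 2
      ring_nf
    simpa using h2
  refine squeeze_zero_norm' ?_ hg
  filter_upwards [eventually_ge_atTop (2 * |x| + 2)] with s hs
  have hx : |x| ≤ s / 2 - 1 := by linarith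
  have hs0 : (0 : ℝ) < s := by nlinarith [abs_nonneg x]
  have habs : |x - s| = s - x := by
    rw [abs_sub_comm, abs_of_nonneg (by linarith [le_abs_self x])]
  have hsx2 : s / 2 ≤ s - x := by
    have := neg_abs_le x
    linarith [le_abs_self x]
  have hss : s / 2 ≤ s := by linarith
  have hs2 : (0 : ℝ) < s / 2 := by linarith
  rw [habs, Real.norm_eq_abs]
  rcases le_total x 0 with hx0 | hx0
  · -- s ≤ s - x
    have hba : s ≤ s - x := by linarith
    have h1 := my_rpow_sub_le hα0.le hα1.le hs0 hba
    have hmono : s ^ (α - 1) ≤ (s / 2) ^ (α - 1) :=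
      Real.rpow_le_rpow_of_nonpos hs2 hss (by linarith)
    have hnn : (0:ℝ) ≤ (s - x) ^ α - s ^ α := by
      have := Real.rpow_le_rpow hs0.le hba hα0.le
      linarith
    have hax : -x = |x| := (abs_of_nonpos hx0).symm
    have key : (s - x) ^ α - s ^ α ≤ α * (s / 2) ^ (α - 1) * (-x) := by
      calc (s - x) ^ α - s ^ α ≤ α * s ^ (α - 1) * (s - x - s) := h1
        _ = (α * (-x)) * s ^ (α - 1) := by ring
        _ ≤ (α * (-x)) * (s / 2) ^ (α - 1) :=
            mul_le_mul_of_nonneg_left hmono (by nlinarith)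
        _ = α * (s / 2) ^ (α - 1) * (-x) := by ring
    rw [abs_of_nonneg hnn, ← hax]
    exact key
  · -- s - x ≤ s
    have hba : s - x ≤ s := by linarith
    have hsx0 : (0 : ℝ) < s - x := by linarith
    have h1 := my_rpow_sub_le hα0.le hα1.le hsx0 hba
    have hmono : (s - x) ^ (α - 1) ≤ (s / 2) ^ (α - 1) :=
      Real.rpow_le_rpow_of_nonpos hs2 hsx2 (by linarith)
    have hnn : (s - x) ^ α - s ^ α ≤ 0 := by
      have := Real.rpow_le_rpow hsx0.le hba hα0.le
      linarith
    have hax : x = |x| := (abs_of_nonneg hx0).symm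
    have key : s ^ α - (s - x) ^ α ≤ α * (s / 2) ^ (α - 1) * x := by
      calc s ^ α - (s - x) ^ α ≤ α * (s - x) ^ (α - 1) * (s - (s - x)) := h1
        _ = (α * x) * (s - x) ^ (α - 1) := by ring
        _ ≤ (α * x) * (s / 2) ^ (α - 1) :=
            mul_le_mul_of_nonneg_left hmono (by nlinarith)
        _ = α * (s / 2) ^ (α - 1) * x := by ring
    rw [abs_of_nonpos hnn, neg_sub, ← hax]
    exact key

/-- For `0 < α < 1` and square integrable `X`, `Var(|X-s|^α) → 0` as `s → ∞`. -/
theorem stmt5 (μ : Measure ℝ) [IsProbabilityMeasure μ]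
    (α : ℝ) (hα0 : 0 < α) (hα1 : α < 1)
    (h2 : Integrable (fun x => x ^ 2) μ) :
    Tendsto (fun s : ℝ => variance (fun x => |x - s| ^ α) μ) atTop (nhds 0) := by
  -- continuity / measurability of the maps
  have hcont : ∀ s : ℝ, Continuous fun x : ℝ => |x - s| ^ α := by
    intro s
    apply Continuous.rpow_const ((continuous_id.sub continuous_const).abs)
    intro x
    exact Or.inr hα0.le
  -- pointwise bound: t ^ α ≤ 1 + t ^ 2 for t ≥ 0, used for integrability
  have hpow_le : ∀ t : ℝ, 0 ≤ t → t ^ α ≤ 1 + t ^ 2 := by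
    intro t ht
    rcases le_total t 1 with ht1 | ht1
    · have : t ^ α ≤ 1 := Real.rpow_le_one ht ht1 hα0.le
      nlinarith
    · have h1 : t ^ α ≤ t ^ (2 : ℝ) :=
        Real.rpow_le_rpow_of_exponent_le ht1 (by linarith)
      have h2' : t ^ (2 : ℝ) = t ^ 2 := by
        rw [← Real.rpow_natCast t 2]; norm_num
      rw [h2'] at h1
      nlinarith
  -- integrability of each |x - s| ^ α
  have hint : ∀ s : ℝ, Integrable (fun x => |x - s| ^ α) μ := by
    intro s
    have hb : Integrable (fun x : ℝ => 1 + (x - s) ^ 2) μ := by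
      have : Integrable (fun x : ℝ => x) μ := by
        have hm : MemLp (id : ℝ → ℝ) 2 μ :=
          (memLp_two_iff_integrable_sq aestronglyMeasurable_id).2 (by simpa using h2)
        exact hm.integrable one_le_two
      have : Integrable (fun x : ℝ => 1 + (x ^ 2 - 2 * s * x + s ^ 2)) μ := by
        exact (integrable_const 1).add ((h2.sub ((this.const_mul (2 * s)))).add
          (integrable_const (s ^ 2)))
      convert this using 1
      ext x
      ring
    refine hb.mono' (hcont s).aestronglyMeasurable ?_
    filter_upwards with x
    rw [Real.norm_eq_abs, abs_of_nonneg (Real.rpow_nonneg (abs_nonneg _) _)]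
    calc |x - s| ^ α ≤ 1 + |x - s| ^ 2 := hpow_le _ (abs_nonneg _)
      _ = 1 + (x - s) ^ 2 := by rw [sq_abs]
  -- the second moment of the shifted variable tends to zero
  have hkey : Tendsto (fun s : ℝ => ∫ x, (|x - s| ^ α - s ^ α) ^ 2 ∂μ)
      atTop (nhds 0) := by
    have h0 : (0 : ℝ) = ∫ x, (0 : ℝ) ∂μ := by simp
    rw [h0]
    apply tendsto_integral_filter_of_dominated_convergence
      (bound := fun x : ℝ => 1 + x ^ 2)
    · filter_upwards with s
      exact (((hcont s).sub continuous_const).pow 2).aestronglyMeasurable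
    · filter_upwards [eventually_ge_atTop (0 : ℝ)] with s hs
      filter_upwards with x
      rw [Real.norm_eq_abs, abs_of_nonneg (sq_nonneg _)]
      have htri : abs (|x - s| - s) ≤ |x| := by
        have h := abs_abs_sub_abs_le_abs_sub (x - s) (-s)
        simp only [abs_neg, sub_neg_eq_add, sub_add_cancel] at h
        rwa [abs_of_nonneg hs] at h
      have hd : abs (|x - s| ^ α - s ^ α) ≤ |x| ^ α := by
        rcases le_total s |x - s| with h | h
        · have hle := my_rpow_sub_rpow_le hα0.le hα1.le hs h
          have hnn : 0 ≤ |x - s| ^ α - s ^ α := by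
            have := Real.rpow_le_rpow hs h hα0.le
            linarith
          rw [abs_of_nonneg hnn]
          have h0'' : (0:ℝ) ≤ |x - s| - s := by linarith
          have harg : |x - s| - s ≤ |x| :=
            calc |x - s| - s = abs (|x - s| - s) := (abs_of_nonneg h0'').symm
              _ ≤ |x| := htri
          exact hle.trans (Real.rpow_le_rpow h0'' harg hα0.le)
        · have hle := my_rpow_sub_rpow_le hα0.le hα1.le (abs_nonneg (x - s)) h
          have hnn : |x - s| ^ α - s ^ α ≤ 0 := by
            have := Real.rpow_le_rpow (abs_nonneg _) h hα0.le
            linarith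
          rw [abs_of_nonpos hnn, neg_sub]
          have h0'' : (0:ℝ) ≤ s - |x - s| := by linarith
          have harg : s - |x - s| ≤ |x| :=
            calc s - |x - s| = abs (|x - s| - s) :=
                  ((abs_sub_comm _ _).trans (abs_of_nonneg h0'')).symm
              _ ≤ |x| := htri
          exact hle.trans (Real.rpow_le_rpow (by linarith) harg hα0.le)
      have hsq : (|x - s| ^ α - s ^ α) ^ 2 ≤ (|x| ^ α) ^ 2 := by
        rw [← sq_abs (|x - s| ^ α - s ^ α)]
        exact pow_le_pow_left₀ (abs_nonneg _) hd 2
      refine hsq.trans ?_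
      have h1 : (|x| ^ α) ^ 2 = |x| ^ (α * 2) := by
        rw [← Real.rpow_natCast (|x| ^ α) 2, ← Real.rpow_mul (abs_nonneg _)]
        norm_num
      rw [h1]
      have h2' : |x| ^ (α * 2) ≤ 1 + |x| ^ 2 := by
        rcases le_total |x| 1 with hx1 | hx1
        · have hone : |x| ^ (α * 2) ≤ 1 := Real.rpow_le_one (abs_nonneg _) hx1 (by positivity)
          nlinarith [sq_nonneg x, sq_abs x]
        · have hle : |x| ^ (α * 2) ≤ |x| ^ (2 : ℝ) :=
            Real.rpow_le_rpow_of_exponent_le hx1 (by nlinarith)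
          have heq : |x| ^ (2 : ℝ) = |x| ^ 2 := by
            rw [← Real.rpow_natCast |x| 2]; norm_num
          rw [heq] at hle
          linarith
      rw [sq_abs] at h2'
      exact h2'
    · exact (integrable_const 1).add h2
    · filter_upwards with x
      have := my_ptwise hα0 hα1 x
      have h0' : Tendsto (fun s : ℝ => (|x - s| ^ α - s ^ α) ^ 2) atTop (nhds (0 ^ 2)) :=
        this.pow 2
      simpa using h0'
  -- squeeze
  have hub : ∀ᶠ s : ℝ in atTop,
      variance (fun x => |x - s| ^ α) μ ≤ ∫ x, (|x - s| ^ α - s ^ α) ^ 2 ∂μ := by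
    filter_upwards with s
    have hshift := my_var_shift μ (fun x => |x - s| ^ α) (s ^ α) (hint s)
    rw [← hshift]
    have hmeas : AEStronglyMeasurable (fun x => |x - s| ^ α - s ^ α) μ :=
      ((hcont s).sub continuous_const).aestronglyMeasurable
    have := variance_le_expectation_sq (μ := μ) hmeas
    convert this using 2
    rfl
  have hlb : ∀ᶠ s : ℝ in atTop,
      (0 : ℝ) ≤ variance (fun x => |x - s| ^ α) μ := by
    filter_upwards with s
    exact variance_nonneg _ _
  exact tendsto_of_tendsto_of_tendsto_of_le_of_le' tendsto_const_nhds hkey hlb hub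
end

section
/- For α > 1 and a non-degenerate real random variable X (i.e., X is not almost surely constant), Var(|X-s|^α) → ∞ as s → ∞. -/
open MeasureTheory ProbabilityTheory Filter Set

/-- A non-degenerate probability measure on ℝ gives positive mass to some left and right
half-lines. -/
lemma aux_split (μ : Measure ℝ) [IsProbabilityMeasure μ]
    (hnd : ¬ ∃ c : ℝ, ∀ᵐ x ∂μ, x = c) :
    ∃ t : ℝ, 0 < μ (Iic t) ∧ 0 < μ (Ioi t) := by
  by_contra h
  push_neg at h
  -- dichotomy: every Iic has measure 0 or 1
  have dich : ∀ t : ℝ, μ (Iic t) = 0 ∨ μ (Iic t) = 1 := by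
    intro t
    rcases eq_or_lt_of_le (zero_le : 0 ≤ μ (Iic t)) with h0 | h0
    · exact Or.inl h0.symm
    · right
      have h2 := h t h0
      have h3 : μ (Ioi t) = 0 := le_antisymm h2 zero_le
      have hc : Ioi t = (Iic t)ᶜ := by ext x; simp
      have := prob_compl_eq_zero_iff (μ := μ) (measurableSet_Iic (a := t))
      rw [← hc] at this
      exact this.mp h3
  -- S : set of t with μ (Iic t) = 1
  set S : Set ℝ := {t | μ (Iic t) = 1} with hS
  -- S is nonempty
  have hSne : S.Nonempty := by
    by_contra hemp
    have hall : ∀ t : ℝ, μ (Iic t) = 0 := by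
      intro t
      rcases dich t with h1 | h1
      · exact h1
      · exact absurd ⟨t, h1⟩ hemp
    have hcover : (univ : Set ℝ) ⊆ ⋃ n : ℕ, Iic (n : ℝ) := by
      intro x _
      obtain ⟨n, hn⟩ := exists_nat_ge x
      exact mem_iUnion.2 ⟨n, hn⟩
    have : μ (univ : Set ℝ) ≤ ∑' n : ℕ, μ (Iic (n : ℝ)) :=
      le_trans (measure_mono hcover) (measure_iUnion_le _)
    simp [hall] at this
  -- S is bounded below
  have hbdd : BddBelow S := by
    by_contra hb
    -- then every Iic has measure 1, so every Ioi has measure 0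
    have hall1 : ∀ t : ℝ, μ (Iic t) = 1 := by
      intro t
      rcases dich t with h1 | h1
      · exfalso
        apply hb
        refine ⟨t, fun s hs => ?_⟩
        by_contra hts
        push_neg at hts
        have : μ (Iic s) ≤ μ (Iic t) := measure_mono (Iic_subset_Iic.2 hts.le)
        rw [hs, h1] at this
        simp at this
      · exact h1
    have hIoi : ∀ t : ℝ, μ (Ioi t) = 0 := by
      intro t
      have hc : Ioi t = (Iic t)ᶜ := by ext x; simp
      rw [hc, measure_compl measurableSet_Iic (measure_ne_top μ _), hall1 t]
      simp
    have hcover : (univ : Set ℝ) ⊆ ⋃ n : ℕ, Ioi (-(n : ℝ)) := by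
      intro x _
      obtain ⟨n, hn⟩ := exists_nat_gt (-x)
      exact mem_iUnion.2 ⟨n, by simp only [mem_Ioi]; linarith⟩
    have : μ (univ : Set ℝ) ≤ ∑' n : ℕ, μ (Ioi (-(n : ℝ))) :=
      le_trans (measure_mono hcover) (measure_iUnion_le _)
    simp [hIoi] at this
  set c := sInf S with hc
  -- everything below c has measure 0
  have hIio : μ (Iio c) = 0 := by
    have hcover : Iio c ⊆ ⋃ n : ℕ, Iic (c - 1 / (n + 1)) := by
      intro x hx
      have hx' : 0 < c - x := sub_pos.2 (mem_Iio.1 hx)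
      obtain ⟨n, hn⟩ := exists_nat_one_div_lt hx'
      exact mem_iUnion.2 ⟨n, by simp only [mem_Iic]; linarith [hn]⟩
    have hzero : ∀ n : ℕ, μ (Iic (c - 1 / (n + 1))) = 0 := by
      intro n
      rcases dich (c - 1 / (n + 1)) with h1 | h1
      · exact h1
      · exfalso
        have : c ≤ c - 1 / (n + 1) := csInf_le hbdd h1
        have hpos : (0 : ℝ) < 1 / (n + 1) := by positivity
        linarith
    have h5 : μ (Iio c) ≤ ∑' n : ℕ, μ (Iic (c - 1 / (n + 1))) :=
      le_trans (measure_mono hcover) (measure_iUnion_le _)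
    have h6 : ∑' n : ℕ, μ (Iic (c - 1 / (n + 1))) = 0 := by
      simp only [hzero]; exact tsum_zero
    rw [h6] at h5
    exact le_antisymm h5 zero_le
  -- everything above c has measure 0
  have hIoi : μ (Ioi c) = 0 := by
    have hcover : Ioi c ⊆ ⋃ n : ℕ, Ioi (c + 1 / (n + 1)) := by
      intro x hx
      have hx' : 0 < x - c := sub_pos.2 hx
      obtain ⟨n, hn⟩ := exists_nat_one_div_lt hx'
      exact mem_iUnion.2 ⟨n, by simp only [mem_Ioi]; linarith [hn]⟩
    have hzero : ∀ n : ℕ, μ (Ioi (c + 1 / (n + 1))) = 0 := by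
      intro n
      have hlt : c < c + 1 / (n + 1) := by
        have : (0 : ℝ) < 1 / (n + 1) := by positivity
        linarith
      obtain ⟨s, hsS, hs⟩ := (csInf_lt_iff hbdd hSne).1 (hc ▸ hlt)
      have hsub : Ioi (c + 1 / (n + 1)) ⊆ (Iic s)ᶜ := by
        intro x hx
        simp only [mem_compl_iff, mem_Iic, not_le]
        exact lt_of_lt_of_le hs (le_of_lt hx)
      have : μ ((Iic s)ᶜ) = 0 := by
        rw [measure_compl measurableSet_Iic (measure_ne_top μ _), hsS]
        simp
      exact le_antisymm (le_trans (measure_mono hsub) this.le) zero_le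
    have h5 : μ (Ioi c) ≤ ∑' n : ℕ, μ (Ioi (c + 1 / (n + 1))) :=
      le_trans (measure_mono hcover) (measure_iUnion_le _)
    have h6 : ∑' n : ℕ, μ (Ioi (c + 1 / (n + 1))) = 0 := by
      simp only [hzero]; exact tsum_zero
    rw [h6] at h5
    exact le_antisymm h5 zero_le
  -- contradiction with non-degeneracy
  apply hnd
  refine ⟨c, ?_⟩
  have : μ {x : ℝ | ¬ x = c} = 0 := by
    have hsub : {x : ℝ | ¬ x = c} ⊆ Iio c ∪ Ioi c := by
      intro x hx
      rcases lt_trichotomy x c with h1 | h1 | h1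
      · exact Or.inl h1
      · exact absurd h1 hx
      · exact Or.inr h1
    exact le_antisymm (le_trans (measure_mono hsub) (measure_union_null hIio hIoi).le)
      zero_le
  exact ae_iff.2 this

/-- Positive mass on a half-line implies positive mass on some compact subinterval. -/
lemma aux_compact_left (μ : Measure ℝ) (t : ℝ) (h : 0 < μ (Iic t)) :
    ∃ n : ℕ, 0 < μ (Icc (t - n) t) := by
  by_contra hn
  push_neg at hn
  have hzero : ∀ n : ℕ, μ (Icc (t - n) t) = 0 := fun n =>
    le_antisymm (hn n) zero_le
  have hcover : Iic t ⊆ ⋃ n : ℕ, Icc (t - n) t := by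
    intro x hx
    obtain ⟨n, hnx⟩ := exists_nat_ge (t - x)
    exact mem_iUnion.2 ⟨n, ⟨by linarith, hx⟩⟩
  have h5 : μ (Iic t) ≤ ∑' n : ℕ, μ (Icc (t - n) t) :=
    le_trans (measure_mono hcover) (measure_iUnion_le _)
  have h6 : ∑' n : ℕ, μ (Icc (t - (n:ℝ)) t) = 0 := by
    simp only [hzero]; exact tsum_zero
  rw [h6] at h5
  exact absurd (le_antisymm h5 zero_le) (ne_of_gt h)

lemma aux_compact_right (μ : Measure ℝ) (t : ℝ) (h : 0 < μ (Ioi t)) :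
    ∃ n : ℕ, 0 < μ (Icc (t + 1 / (n + 1)) (t + (n + 1))) := by
  by_contra hn
  push_neg at hn
  have hzero : ∀ n : ℕ, μ (Icc (t + 1 / (n + 1)) (t + (n + 1))) = 0 := fun n =>
    le_antisymm (hn n) zero_le
  have hcover : Ioi t ⊆ ⋃ n : ℕ, Icc (t + 1 / (n + 1)) (t + (n + 1)) := by
    intro x hx
    have hx' : 0 < x - t := sub_pos.2 hx
    obtain ⟨n₁, hn₁⟩ := exists_nat_one_div_lt hx'
    obtain ⟨n₂, hn₂⟩ := exists_nat_ge (x - t)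
    refine mem_iUnion.2 ⟨max n₁ n₂, ⟨?_, ?_⟩⟩
    · have h1 : 1 / ((max n₁ n₂ : ℕ) + 1 : ℝ) ≤ 1 / (n₁ + 1 : ℝ) := by
        apply one_div_le_one_div_of_le (by positivity)
        have : (n₁ : ℝ) ≤ (max n₁ n₂ : ℕ) := by exact_mod_cast Nat.cast_le.2 (le_max_left _ _)
        linarith
      linarith [hn₁]
    · have : (n₂ : ℝ) ≤ (max n₁ n₂ : ℕ) := by exact_mod_cast Nat.cast_le.2 (le_max_right _ _)
      linarith
  have h5 : μ (Ioi t) ≤ ∑' n : ℕ, μ (Icc (t + 1 / (n + 1)) (t + (n + 1))) :=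
    le_trans (measure_mono hcover) (measure_iUnion_le _)
  have h6 : ∑' n : ℕ, μ (Icc (t + 1 / ((n:ℝ) + 1)) (t + ((n:ℝ) + 1))) = 0 := by
    simp only [hzero]; exact tsum_zero
  rw [h6] at h5
  exact absurd (le_antisymm h5 zero_le) (ne_of_gt h)

/-- Two-set variance lower bound: if `f ≥ A` on `I` and `f ≤ B` on `J`, then
`Var f ≥ min (μ I) (μ J) * ((A-B)/2)^2`. -/
lemma aux_var_lb (μ : Measure ℝ) [IsProbabilityMeasure μ] (f : ℝ → ℝ)
    (hf : MemLp f 2 μ) (I J : Set ℝ) (hI : MeasurableSet I) (hJ : MeasurableSet J)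
    (A B : ℝ) (hAB : B ≤ A) (hfI : ∀ x ∈ I, A ≤ f x) (hfJ : ∀ x ∈ J, f x ≤ B) :
    min (μ I).toReal (μ J).toReal * ((A - B) / 2) ^ 2 ≤ variance f μ := by
  set m := ∫ x, f x ∂μ with hm
  set d := (A - B) / 2 with hd
  have hd0 : 0 ≤ d := by rw [hd]; linarith
  have hveq : variance f μ = ∫ x, (f x - m) ^ 2 ∂μ := by
    rw [variance_eq_integral hf.aemeasurable]
  have hg : Integrable (fun x => (f x - m) ^ 2) μ := by
    have := (hf.sub (memLp_const m)).integrable_sq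
    simpa using this
  have hgnn : 0 ≤ᵐ[μ] fun x => (f x - m) ^ 2 := ae_of_all _ fun x => sq_nonneg _
  rcases le_or_gt m ((A + B) / 2) with hcase | hcase
  · -- use I
    have hpt : ∀ x ∈ I, d ^ 2 ≤ (f x - m) ^ 2 := by
      intro x hx
      have h1 : d ≤ f x - m := by
        have := hfI x hx
        rw [hd]; linarith
      exact pow_le_pow_left₀ hd0 h1 2
    calc min (μ I).toReal (μ J).toReal * d ^ 2
        ≤ (μ I).toReal * d ^ 2 :=
          mul_le_mul_of_nonneg_right (min_le_left _ _) (sq_nonneg _)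
      _ = ∫ _ in I, d ^ 2 ∂μ := by rw [setIntegral_const]; simp [mul_comm, measureReal_def]
      _ ≤ ∫ x in I, (f x - m) ^ 2 ∂μ :=
          setIntegral_mono_on (integrableOn_const (measure_ne_top μ I))
            hg.integrableOn hI hpt
      _ ≤ ∫ x, (f x - m) ^ 2 ∂μ := setIntegral_le_integral hg hgnn
      _ = variance f μ := hveq.symm
  · -- use J
    have hpt : ∀ x ∈ J, d ^ 2 ≤ (f x - m) ^ 2 := by
      intro x hx
      have h1 : d ≤ m - f x := by
        have := hfJ x hx
        rw [hd]; linarith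
      have h2 : d ^ 2 ≤ (m - f x) ^ 2 := pow_le_pow_left₀ hd0 h1 2
      have h3 : (m - f x) ^ 2 = (f x - m) ^ 2 := by ring
      linarith
    calc min (μ I).toReal (μ J).toReal * d ^ 2
        ≤ (μ J).toReal * d ^ 2 :=
          mul_le_mul_of_nonneg_right (min_le_right _ _) (sq_nonneg _)
      _ = ∫ _ in J, d ^ 2 ∂μ := by rw [setIntegral_const]; simp [mul_comm, measureReal_def]
      _ ≤ ∫ x in J, (f x - m) ^ 2 ∂μ :=
          setIntegral_mono_on (integrableOn_const (measure_ne_top μ J))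
            hg.integrableOn hJ hpt
      _ ≤ ∫ x, (f x - m) ^ 2 ∂μ := setIntegral_le_integral hg hgnn
      _ = variance f μ := hveq.symm

/-- For `α > 1` and non-degenerate `X` with finite `2α`-moment,
`Var(|X-s|^α) → ∞` as `s → ∞`. -/
theorem stmt6 (μ : Measure ℝ) [IsProbabilityMeasure μ]
    (α : ℝ) (hα : 1 < α)
    (hmom : Integrable (fun x => |x| ^ (2 * α)) μ)
    (hnd : ¬ ∃ c : ℝ, ∀ᵐ x ∂μ, x = c) :
    Tendsto (fun s : ℝ => variance (fun x => |x - s| ^ α) μ) atTop atTop := by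
  have hα0 : (0 : ℝ) < α := by linarith
  -- each f_s is in L²
  have hL2 : ∀ s : ℝ, MemLp (fun x => |x - s| ^ α) 2 μ := by
    intro s
    have hcont : Continuous fun x : ℝ => |x - s| ^ α :=
      (continuous_id.sub continuous_const).abs.rpow_const fun x => Or.inr hα0.le
    refine (memLp_two_iff_integrable_sq hcont.aestronglyMeasurable).2 ?_
    have heq : (fun x : ℝ => (|x - s| ^ α) ^ 2) = fun x : ℝ => |x - s| ^ (2 * α) := by
      funext x
      rw [← Real.rpow_natCast (|x - s| ^ α) 2, ← Real.rpow_mul (abs_nonneg _)]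
      norm_num [mul_comm]
    rw [heq]
    have hgint : Integrable (fun x : ℝ => (2 : ℝ) ^ (2 * α) * (|x| ^ (2 * α) + |s| ^ (2 * α))) μ :=
      (hmom.add (integrable_const _)).const_mul _
    have hcont2 : Continuous fun x : ℝ => |x - s| ^ (2 * α) :=
      (continuous_id.sub continuous_const).abs.rpow_const fun x => Or.inr (by positivity)
    refine hgint.mono' hcont2.aestronglyMeasurable (ae_of_all _ fun x => ?_)
    rw [Real.norm_eq_abs, abs_of_nonneg (Real.rpow_nonneg (abs_nonneg _) _)]
    have h1 : |x - s| ≤ 2 * max |x| |s| := by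
      calc |x - s| ≤ |x| + |s| := abs_sub x s
        _ ≤ max |x| |s| + max |x| |s| := add_le_add (le_max_left _ _) (le_max_right _ _)
        _ = 2 * max |x| |s| := by ring
    calc |x - s| ^ (2 * α) ≤ (2 * max |x| |s|) ^ (2 * α) :=
          Real.rpow_le_rpow (abs_nonneg _) h1 (by positivity)
      _ = 2 ^ (2 * α) * (max |x| |s|) ^ (2 * α) :=
          Real.mul_rpow (by norm_num) (le_max_of_le_left (abs_nonneg _))
      _ ≤ 2 ^ (2 * α) * (|x| ^ (2 * α) + |s| ^ (2 * α)) := by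
          apply mul_le_mul_of_nonneg_left _ (by positivity)
          rcases max_cases |x| |s| with ⟨h, _⟩ | ⟨h, _⟩ <;> rw [h]
          · exact le_add_of_nonneg_right (Real.rpow_nonneg (abs_nonneg _) _)
          · exact le_add_of_nonneg_left (Real.rpow_nonneg (abs_nonneg _) _)
  -- get the split point and compact intervals
  obtain ⟨t, ht1, ht2⟩ := aux_split μ hnd
  obtain ⟨n, hp⟩ := aux_compact_left μ t ht1
  obtain ⟨k, hq⟩ := aux_compact_right μ t ht2
  set δ : ℝ := 1 / (k + 1) with hδ
  have hδ0 : 0 < δ := by positivity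
  set b₁ : ℝ := t + δ with hb₁
  set b₂ : ℝ := t + (k + 1) with hb₂
  set I : Set ℝ := Icc (t - n) t with hI
  set J : Set ℝ := Icc b₁ b₂ with hJ
  have hb₁b₂ : b₁ ≤ b₂ := by
    rw [hb₁, hb₂, hδ]
    have : (1 : ℝ) / (k + 1) ≤ 1 := by
      rw [div_le_one (by positivity)]; linarith [Nat.cast_nonneg (α := ℝ) k]
    linarith
  set p : ℝ := (μ I).toReal with hpdef
  set q : ℝ := (μ J).toReal with hqdef
  have hp0 : 0 < p := ENNReal.toReal_pos (ne_of_gt hp) (measure_ne_top μ _)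
  have hq0 : 0 < q := ENNReal.toReal_pos (ne_of_gt hq) (measure_ne_top μ _)
  set C : ℝ := min p q with hC
  have hC0 : 0 < C := lt_min hp0 hq0
  -- the lower bound function
  set L : ℝ → ℝ := fun s => C * (δ / 2 * (s - b₁) ^ (α - 1)) ^ 2 with hL
  -- L tends to atTop
  have hLtop : Tendsto L atTop atTop := by
    have h1 : Tendsto (fun s : ℝ => (s - b₁) ^ (α - 1)) atTop atTop := by
      apply (tendsto_rpow_atTop (by linarith : (0:ℝ) < α - 1)).comp
      exact tendsto_atTop_add_const_right atTop (-b₁) tendsto_id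
    have h2 : Tendsto (fun s : ℝ => δ / 2 * (s - b₁) ^ (α - 1)) atTop atTop :=
      h1.const_mul_atTop (by positivity)
    have h3 : Tendsto (fun s : ℝ => (δ / 2 * (s - b₁) ^ (α - 1)) ^ 2) atTop atTop := by
      have := h2.atTop_mul_atTop₀ h2
      simpa [sq] using this
    exact h3.const_mul_atTop hC0
  -- eventually L s ≤ variance
  apply tendsto_atTop_mono' _ _ hLtop
  filter_upwards [eventually_ge_atTop (b₂ + 1)] with s hs
  -- setup for variance bound
  set A : ℝ := (s - t) ^ α with hA
  set B : ℝ := (s - b₁) ^ α with hB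
  have hu0 : 0 < s - b₁ := by linarith
  have hst : s - b₁ ≤ s - t := by rw [hb₁]; linarith
  have hAB : B ≤ A := Real.rpow_le_rpow hu0.le hst hα0.le
  have htb₂ : t ≤ b₂ := by
    rw [hb₂]; have : (0:ℝ) ≤ k + 1 := by positivity
    linarith
  have hfI : ∀ x ∈ I, A ≤ |x - s| ^ α := by
    intro x hx
    have hx2 : x ≤ t := hx.2
    have hxs : x ≤ s := by linarith
    have habs : |x - s| = s - x := by
      rw [abs_sub_comm]; exact abs_of_nonneg (by linarith)
    rw [habs, hA]
    exact Real.rpow_le_rpow (by linarith) (by linarith) hα0.le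
  have hfJ : ∀ x ∈ J, |x - s| ^ α ≤ B := by
    intro x hx
    have hx1 : b₁ ≤ x := hx.1
    have hx2 : x ≤ b₂ := hx.2
    have hxs : x ≤ s := by linarith
    have habs : |x - s| = s - x := by
      rw [abs_sub_comm]; exact abs_of_nonneg (by linarith)
    rw [habs, hB]
    exact Real.rpow_le_rpow (by linarith) (by linarith) hα0.le
  have key := aux_var_lb μ (fun x => |x - s| ^ α) (hL2 s) I J
    measurableSet_Icc measurableSet_Icc A B hAB hfI hfJ
  -- A - B ≥ δ * (s - b₁)^(α-1)
  have hABlb : δ * (s - b₁) ^ (α - 1) ≤ A - B := by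
    set u : ℝ := s - b₁ with hu
    have hstu : s - t = u + δ := by rw [hu, hb₁]; ring
    have huδ0 : 0 < u + δ := by linarith
    have hAeq : A = (u + δ) * (u + δ) ^ (α - 1) := by
      rw [hA, hstu]
      have : α = 1 + (α - 1) := by ring
      rw [this, Real.rpow_add huδ0, Real.rpow_one]
      congr 2
      ring
    have hBeq : B = u * u ^ (α - 1) := by
      rw [hB]
      have : α = 1 + (α - 1) := by ring
      rw [this, Real.rpow_add hu0, Real.rpow_one]
      congr 2
      ring
    have hmono : u ^ (α - 1) ≤ (u + δ) ^ (α - 1) :=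
      Real.rpow_le_rpow hu0.le (by linarith) (by linarith)
    have hupos : 0 ≤ u := hu0.le
    have hr0 : 0 ≤ u ^ (α - 1) := Real.rpow_nonneg hupos _
    rw [hAeq, hBeq]
    nlinarith [Real.rpow_nonneg huδ0.le (α - 1)]
  -- conclude
  have hfinal : L s ≤ C * ((A - B) / 2) ^ 2 := by
    rw [hL]
    apply mul_le_mul_of_nonneg_left _ hC0.le
    apply pow_le_pow_left₀ (by positivity)
    linarith
  exact le_trans hfinal key
end

section
/- The asymptotic breakdown value of the distance variance is zero: for every ε ∈ (0,1) and every distribution F with finite second moment, letting F_ε = (1-ε)F + εΔ_s (point mass at s), dVar(F_ε) → ∞ as s → ∞. -/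
open MeasureTheory Filter


namespace Stmt10Aux
open ENNReal

/-! ### Product-measure helpers -/

lemma smul_prod' {α β : Type*} [MeasurableSpace α] [MeasurableSpace β]
    (c : ℝ≥0∞) (μ : Measure α) (ν : Measure β) [SFinite μ] [SFinite ν] :
    (c • μ).prod ν = c • μ.prod ν := by
  ext s hs
  simp only [Measure.prod_apply hs, Measure.smul_apply, smul_eq_mul, lintegral_smul_measure]

lemma prod_smul' {α β : Type*} [MeasurableSpace α] [MeasurableSpace β]
    (c : ℝ≥0∞) (μ : Measure α) (ν : Measure β) [SFinite μ] [SFinite ν] :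
    μ.prod (c • ν) = c • μ.prod ν := by
  ext s hs
  simp only [Measure.prod_apply hs, Measure.smul_apply, smul_eq_mul]
  rw [← lintegral_const_mul c (measurable_measure_prodMk_left hs)]

lemma lint_mix2 {α : Type*} [MeasurableSpace α] (μ₁ μ₂ : Measure α) [SFinite μ₁] [SFinite μ₂]
    (c d : ℝ≥0∞) (f : α × α → ℝ≥0∞) :
    ∫⁻ p, f p ∂((c • μ₁ + d • μ₂).prod (c • μ₁ + d • μ₂)) =
      c*c * ∫⁻ p, f p ∂(μ₁.prod μ₁) + c*d * ∫⁻ p, f p ∂(μ₁.prod μ₂)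
      + d*c * ∫⁻ p, f p ∂(μ₂.prod μ₁) + d*d * ∫⁻ p, f p ∂(μ₂.prod μ₂) := by
  simp only [Measure.prod_add, Measure.add_prod, smul_prod', prod_smul',
    lintegral_add_measure, lintegral_smul_measure, smul_eq_mul]
  ring

lemma lint_mix3 {α : Type*} [MeasurableSpace α] (μ₁ μ₂ : Measure α) [SFinite μ₁] [SFinite μ₂]
    (c d : ℝ≥0∞) (f : α × α × α → ℝ≥0∞) :
    ∫⁻ q, f q ∂((c • μ₁ + d • μ₂).prod ((c • μ₁ + d • μ₂).prod (c • μ₁ + d • μ₂))) =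
      c*c*c * ∫⁻ q, f q ∂(μ₁.prod (μ₁.prod μ₁)) + c*c*d * ∫⁻ q, f q ∂(μ₁.prod (μ₁.prod μ₂))
      + c*d*c * ∫⁻ q, f q ∂(μ₁.prod (μ₂.prod μ₁)) + c*d*d * ∫⁻ q, f q ∂(μ₁.prod (μ₂.prod μ₂))
      + d*c*c * ∫⁻ q, f q ∂(μ₂.prod (μ₁.prod μ₁)) + d*c*d * ∫⁻ q, f q ∂(μ₂.prod (μ₁.prod μ₂))
      + d*d*c * ∫⁻ q, f q ∂(μ₂.prod (μ₂.prod μ₁)) + d*d*d * ∫⁻ q, f q ∂(μ₂.prod (μ₂.prod μ₂)) := by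
  simp only [Measure.prod_add, Measure.add_prod, smul_prod', prod_smul',
    lintegral_add_measure, lintegral_smul_measure, smul_eq_mul]
  ring

lemma lint2 (m₁ m₂ : Measure ℝ) [SFinite m₁] [SFinite m₂] (F : ℝ × ℝ → ℝ≥0∞)
    (hF : Measurable F) :
    ∫⁻ p, F p ∂(m₁.prod m₂) = ∫⁻ x, ∫⁻ y, F (x, y) ∂m₂ ∂m₁ :=
  lintegral_prod _ hF.aemeasurable

lemma lint3 (m₁ m₂ m₃ : Measure ℝ) [SFinite m₁] [SFinite m₂] [SFinite m₃]
    (F : ℝ × ℝ × ℝ → ℝ≥0∞) (hF : Measurable F) :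
    ∫⁻ q, F q ∂(m₁.prod (m₂.prod m₃)) = ∫⁻ x, ∫⁻ y, ∫⁻ z, F (x, (y, z)) ∂m₃ ∂m₂ ∂m₁ := by
  rw [lintegral_prod _ hF.aemeasurable]
  refine lintegral_congr fun x => ?_
  exact lintegral_prod _ (hF.comp measurable_prodMk_left).aemeasurable

lemma toReal_mix2 (a b u v w : ℝ) (ha : 0 ≤ a) (hb : 0 ≤ b) (hu : 0 ≤ u) (hv : 0 ≤ v)
    (hw : 0 ≤ w) :
    (ENNReal.ofReal a * ENNReal.ofReal a * ENNReal.ofReal u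
      + ENNReal.ofReal a * ENNReal.ofReal b * ENNReal.ofReal v
      + ENNReal.ofReal b * ENNReal.ofReal a * ENNReal.ofReal w
      + ENNReal.ofReal b * ENNReal.ofReal b * 0).toReal = a*a*u + a*b*v + b*a*w := by
  have e : ∀ u' v' : ℝ, 0 ≤ u' → ENNReal.ofReal u' * ENNReal.ofReal v' = ENNReal.ofReal (u'*v') :=
    fun _ _ h => (ENNReal.ofReal_mul h).symm
  rw [mul_zero, add_zero, e a a ha, e _ u (mul_nonneg ha ha), e a b ha,
    e _ v (mul_nonneg ha hb), e b a hb, e _ w (mul_nonneg hb ha),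
    ← ENNReal.ofReal_add (by positivity) (by positivity),
    ← ENNReal.ofReal_add (by positivity) (by positivity),
    ENNReal.toReal_ofReal (by positivity)]

lemma toReal_mix3 (a b t n m1 m2 : ℝ) (ha : 0 ≤ a) (hb : 0 ≤ b) (ht : 0 ≤ t) (hn : 0 ≤ n)
    (hm1 : 0 ≤ m1) (hm2 : 0 ≤ m2) :
    (ENNReal.ofReal a * ENNReal.ofReal a * ENNReal.ofReal a * ENNReal.ofReal t
      + ENNReal.ofReal a * ENNReal.ofReal a * ENNReal.ofReal b * ENNReal.ofReal n
      + ENNReal.ofReal a * ENNReal.ofReal b * ENNReal.ofReal a * ENNReal.ofReal n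
      + ENNReal.ofReal a * ENNReal.ofReal b * ENNReal.ofReal b * ENNReal.ofReal m2
      + ENNReal.ofReal b * ENNReal.ofReal a * ENNReal.ofReal a * ENNReal.ofReal m1
      + ENNReal.ofReal b * ENNReal.ofReal a * ENNReal.ofReal b * 0
      + ENNReal.ofReal b * ENNReal.ofReal b * ENNReal.ofReal a * 0
      + ENNReal.ofReal b * ENNReal.ofReal b * ENNReal.ofReal b * 0).toReal
      = a*a*a*t + a*a*b*n + a*b*a*n + a*b*b*m2 + b*a*a*m1 := by
  have e : ∀ u' v' : ℝ, 0 ≤ u' → ENNReal.ofReal u' * ENNReal.ofReal v' = ENNReal.ofReal (u'*v') :=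
    fun _ _ h => (ENNReal.ofReal_mul h).symm
  rw [mul_zero, mul_zero, mul_zero, add_zero, add_zero, add_zero,
    e a a ha, e _ a (mul_nonneg ha ha), e _ t (mul_nonneg (mul_nonneg ha ha) ha),
    e _ b (mul_nonneg ha ha), e _ n (mul_nonneg (mul_nonneg ha ha) hb),
    e a b ha, e _ a (mul_nonneg ha hb), e _ n (mul_nonneg (mul_nonneg ha hb) ha),
    e _ b (mul_nonneg ha hb), e _ m2 (mul_nonneg (mul_nonneg ha hb) hb),
    e b a hb, e _ a (mul_nonneg hb ha), e _ m1 (mul_nonneg (mul_nonneg hb ha) ha),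
    ← ENNReal.ofReal_add (by positivity) (by positivity),
    ← ENNReal.ofReal_add (by positivity) (by positivity),
    ← ENNReal.ofReal_add (by positivity) (by positivity),
    ← ENNReal.ofReal_add (by positivity) (by positivity),
    ENNReal.toReal_ofReal (by positivity)]

/-! ### Cauchy–Schwarz -/

lemma myCS {α : Type*} [MeasurableSpace α] {μ : Measure α} (f g : α → ℝ)
    (hfm : AEStronglyMeasurable f μ) (hgm : AEStronglyMeasurable g μ)
    (hfn : ∀ x, 0 ≤ f x) (hgn : ∀ x, 0 ≤ g x)
    (hf2 : Integrable (fun x => f x ^ 2) μ) (hg2 : Integrable (fun x => g x ^ 2) μ) :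
    ∫ x, f x * g x ∂μ ≤ Real.sqrt (∫ x, f x ^ 2 ∂μ) * Real.sqrt (∫ x, g x ^ 2 ∂μ) := by
  have hpq : Real.HolderConjugate 2 2 := Real.HolderConjugate.two_two
  have hf : MemLp f (ENNReal.ofReal 2) μ := by
    rw [show ENNReal.ofReal 2 = 2 by norm_num]
    exact (memLp_two_iff_integrable_sq hfm).2 hf2
  have hg : MemLp g (ENNReal.ofReal 2) μ := by
    rw [show ENNReal.ofReal 2 = 2 by norm_num]
    exact (memLp_two_iff_integrable_sq hgm).2 hg2
  have key := integral_mul_le_Lp_mul_Lq_of_nonneg hpq (ae_of_all _ hfn) (ae_of_all _ hgn) hf hg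
  have e1 : ∀ x, f x ^ (2:ℝ) = f x ^ 2 := fun x => by
    rw [show (2:ℝ) = ((2:ℕ):ℝ) by norm_num, Real.rpow_natCast]
  have e2 : ∀ x, g x ^ (2:ℝ) = g x ^ 2 := fun x => by
    rw [show (2:ℝ) = ((2:ℕ):ℝ) by norm_num, Real.rpow_natCast]
  simp only [e1, e2] at key
  calc ∫ x, f x * g x ∂μ ≤ (∫ x, f x ^ 2 ∂μ) ^ ((1:ℝ)/2) * (∫ x, g x ^ 2 ∂μ) ^ ((1:ℝ)/2) := key
    _ = Real.sqrt (∫ x, f x ^ 2 ∂μ) * Real.sqrt (∫ x, g x ^ 2 ∂μ) := by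
        rw [Real.sqrt_eq_rpow, Real.sqrt_eq_rpow]

/-! ### Integrability -/

variable {ν : Measure ℝ} [IsProbabilityMeasure ν]

lemma int_fst' {β : Type*} [MeasurableSpace β] {f : ℝ → ℝ} (hf : Integrable f ν)
    (m : Measure β) [IsProbabilityMeasure m] :
    Integrable (fun p : ℝ × β => f p.1) (ν.prod m) := by
  have := hf.mul_prod (integrable_const (1:ℝ)) (ν := m)
  simpa using this

lemma int_snd' {β : Type*} [MeasurableSpace β] {f : β → ℝ} {m : Measure β}
    [IsProbabilityMeasure m] (hf : Integrable f m) :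
    Integrable (fun p : ℝ × β => f p.2) (ν.prod m) := by
  have := (integrable_const (1:ℝ) (μ := ν)).mul_prod hf
  simpa using this

lemma int_id (h2 : Integrable (fun x => x ^ 2) ν) : Integrable (fun x : ℝ => x) ν := by
  refine Integrable.mono' ((integrable_const (1:ℝ)).add h2) ?_ (ae_of_all _ fun x => ?_)
  · exact measurable_id.aestronglyMeasurable
  · simp only [Real.norm_eq_abs, Pi.add_apply]
    nlinarith [sq_nonneg (|x| - 1), sq_abs x, abs_nonneg x]

lemma int_sq_sub (h2 : Integrable (fun x => x ^ 2) ν) (s : ℝ) :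
    Integrable (fun x : ℝ => (x - s) ^ 2) ν := by
  have hx := int_id h2
  have : Integrable (fun x : ℝ => x ^ 2 - (2*s) * x + s^2) ν :=
    (h2.sub (hx.const_mul (2*s))).add (integrable_const _)
  exact this.congr (ae_of_all _ fun x => by ring)

lemma int_abs_sq_sub (h2 : Integrable (fun x => x ^ 2) ν) (s : ℝ) :
    Integrable (fun x : ℝ => |x - s| ^ 2) ν :=
  (int_sq_sub h2 s).congr (ae_of_all _ fun x => (sq_abs _).symm)

lemma int_abs_sub (h2 : Integrable (fun x => x ^ 2) ν) (s : ℝ) :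
    Integrable (fun x : ℝ => |x - s|) ν := by
  refine Integrable.mono' ((int_id h2).abs.add (integrable_const |s|)) ?_
    (ae_of_all _ fun x => ?_)
  · exact (measurable_id.sub measurable_const).abs.aestronglyMeasurable
  · simp only [Real.norm_eq_abs, abs_abs, Pi.add_apply]
    exact abs_sub _ _

lemma int_sq2 (h2 : Integrable (fun x => x ^ 2) ν) :
    Integrable (fun p : ℝ × ℝ => (p.1 - p.2) ^ 2) (ν.prod ν) := by
  have hx := int_id h2
  have : Integrable (fun p : ℝ × ℝ => p.1 ^ 2 - 2 * (p.1 * p.2) + p.2 ^ 2) (ν.prod ν) :=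
    ((int_fst' h2 ν).sub ((hx.mul_prod hx).const_mul 2)).add (int_snd' h2)
  exact this.congr (ae_of_all _ fun p => by ring)

lemma int_abs_sq2 (h2 : Integrable (fun x => x ^ 2) ν) :
    Integrable (fun p : ℝ × ℝ => |p.1 - p.2| ^ 2) (ν.prod ν) :=
  (int_sq2 h2).congr (ae_of_all _ fun p => (sq_abs _).symm)

lemma int_abs2 (h2 : Integrable (fun x => x ^ 2) ν) :
    Integrable (fun p : ℝ × ℝ => |p.1 - p.2|) (ν.prod ν) := by
  have hx := (int_id h2).abs
  refine Integrable.mono' ((int_fst' hx ν).add (int_snd' hx)) ?_ (ae_of_all _ fun p => ?_)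
  · exact ((measurable_fst.sub measurable_snd).abs).aestronglyMeasurable
  · simp only [Real.norm_eq_abs, abs_abs, Pi.add_apply]
    exact abs_sub _ _

lemma int_N (h2 : Integrable (fun x => x ^ 2) ν) (s : ℝ) :
    Integrable (fun p : ℝ × ℝ => |p.1 - p.2| * |p.1 - s|) (ν.prod ν) := by
  refine Integrable.mono' (((int_sq2 h2).add (int_fst' (int_sq_sub h2 s) ν)).div_const 2) ?_
    (ae_of_all _ fun p => ?_)
  · exact ((measurable_fst.sub measurable_snd).abs.mul
      ((measurable_fst.sub measurable_const).abs)).aestronglyMeasurable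
  · simp only [Real.norm_eq_abs, Pi.add_apply]
    rw [abs_of_nonneg (mul_nonneg (abs_nonneg _) (abs_nonneg _))]
    nlinarith [sq_nonneg (|p.1 - p.2| - |p.1 - s|), sq_abs (p.1 - p.2), sq_abs (p.1 - s),
      mul_nonneg (abs_nonneg (p.1 - p.2)) (abs_nonneg (p.1 - s))]

lemma int_sq31 (h2 : Integrable (fun x => x ^ 2) ν) :
    Integrable (fun q : ℝ × ℝ × ℝ => (q.1 - q.2.1) ^ 2) (ν.prod (ν.prod ν)) := by
  have hx := int_id h2
  have : Integrable (fun q : ℝ × ℝ × ℝ => q.1 ^ 2 - 2 * (q.1 * q.2.1) + q.2.1 ^ 2)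
      (ν.prod (ν.prod ν)) :=
    ((int_fst' h2 (ν.prod ν)).sub ((hx.mul_prod (int_fst' hx ν)).const_mul 2)).add
      (int_snd' (int_fst' h2 ν))
  exact this.congr (ae_of_all _ fun q => by ring)

lemma int_sq32 (h2 : Integrable (fun x => x ^ 2) ν) :
    Integrable (fun q : ℝ × ℝ × ℝ => (q.1 - q.2.2) ^ 2) (ν.prod (ν.prod ν)) := by
  have hx := int_id h2
  have : Integrable (fun q : ℝ × ℝ × ℝ => q.1 ^ 2 - 2 * (q.1 * q.2.2) + q.2.2 ^ 2)
      (ν.prod (ν.prod ν)) :=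
    ((int_fst' h2 (ν.prod ν)).sub ((hx.mul_prod (int_snd' hx)).const_mul 2)).add
      (int_snd' (int_snd' h2))
  exact this.congr (ae_of_all _ fun q => by ring)

lemma int_T (h2 : Integrable (fun x => x ^ 2) ν) :
    Integrable (fun q : ℝ × ℝ × ℝ => |q.1 - q.2.1| * |q.1 - q.2.2|) (ν.prod (ν.prod ν)) := by
  refine Integrable.mono' (((int_sq31 h2).add (int_sq32 h2)).div_const 2) ?_
    (ae_of_all _ fun q => ?_)
  · exact ((measurable_fst.sub (measurable_fst.comp measurable_snd)).abs.mul
      ((measurable_fst.sub (measurable_snd.comp measurable_snd)).abs)).aestronglyMeasurable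
  · simp only [Real.norm_eq_abs, Pi.add_apply]
    rw [abs_of_nonneg (mul_nonneg (abs_nonneg _) (abs_nonneg _))]
    nlinarith [sq_nonneg (|q.1 - q.2.1| - |q.1 - q.2.2|), sq_abs (q.1 - q.2.1),
      sq_abs (q.1 - q.2.2),
      mul_nonneg (abs_nonneg (q.1 - q.2.1)) (abs_nonneg (q.1 - q.2.2))]

/-! ### Mixture integral computations -/

lemma mix2_integral (s : ℝ) (g : ℝ × ℝ → ℝ) (hg : Measurable g) (hgn : ∀ p, 0 ≤ g p)
    (hsym : ∀ x y, g (x, y) = g (y, x)) (hzero : g (s, s) = 0)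
    (hint : Integrable g (ν.prod ν)) (hints : Integrable (fun x => g (x, s)) ν)
    (a b : ℝ) (ha : 0 ≤ a) (hb : 0 ≤ b) :
    ∫ p, g p ∂((ENNReal.ofReal a • ν + ENNReal.ofReal b • Measure.dirac s).prod
        (ENNReal.ofReal a • ν + ENNReal.ofReal b • Measure.dirac s)) =
      a*a* (∫ p, g p ∂(ν.prod ν)) + 2*(a*b) * ∫ x, g (x, s) ∂ν := by
  have hgE : Measurable fun p : ℝ × ℝ => ENNReal.ofReal (g p) := hg.ennreal_ofReal
  rw [integral_eq_lintegral_of_nonneg_ae (ae_of_all _ hgn) hg.aestronglyMeasurable]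
  rw [lint_mix2]
  have t11 : ∫⁻ p, ENNReal.ofReal (g p) ∂(ν.prod ν) = ENNReal.ofReal (∫ p, g p ∂(ν.prod ν)) :=
    (ofReal_integral_eq_lintegral_ofReal hint (ae_of_all _ hgn)).symm
  have t1d : ∫⁻ p, ENNReal.ofReal (g p) ∂(ν.prod (Measure.dirac s))
      = ENNReal.ofReal (∫ x, g (x, s) ∂ν) := by
    rw [lint2 _ _ _ hgE]
    simp only [lintegral_dirac]
    exact (ofReal_integral_eq_lintegral_ofReal hints (ae_of_all _ fun x => hgn _)).symm
  have td1 : ∫⁻ p, ENNReal.ofReal (g p) ∂((Measure.dirac s).prod ν)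
      = ENNReal.ofReal (∫ x, g (x, s) ∂ν) := by
    rw [lint2 _ _ _ hgE, lintegral_dirac]
    have : ∀ y : ℝ, ENNReal.ofReal (g (s, y)) = ENNReal.ofReal (g (y, s)) := fun y => by
      rw [hsym]
    simp only [this]
    exact (ofReal_integral_eq_lintegral_ofReal hints (ae_of_all _ fun x => hgn _)).symm
  have tdd : ∫⁻ p, ENNReal.ofReal (g p) ∂((Measure.dirac s).prod (Measure.dirac s)) = 0 := by
    rw [lint2 _ _ _ hgE, lintegral_dirac, lintegral_dirac, hzero, ENNReal.ofReal_zero]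
  rw [t11, t1d, td1, tdd, toReal_mix2 a b _ _ _ ha hb (integral_nonneg hgn)
    (integral_nonneg fun x => hgn _) (integral_nonneg fun x => hgn _)]
  ring

lemma mix3_integral (h2 : Integrable (fun x => x ^ 2) ν) (s a b : ℝ) (ha : 0 ≤ a)
    (hb : 0 ≤ b) :
    ∫ q, |q.1 - q.2.1| * |q.1 - q.2.2|
        ∂((ENNReal.ofReal a • ν + ENNReal.ofReal b • Measure.dirac s).prod
          ((ENNReal.ofReal a • ν + ENNReal.ofReal b • Measure.dirac s).prod
            (ENNReal.ofReal a • ν + ENNReal.ofReal b • Measure.dirac s))) =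
      a*a*a * (∫ q, |q.1 - q.2.1| * |q.1 - q.2.2| ∂(ν.prod (ν.prod ν)))
      + 2*(a*a*b) * (∫ p : ℝ × ℝ, |p.1 - p.2| * |p.1 - s| ∂(ν.prod ν))
      + (a*b*b) * (∫ x, |x - s| ^ 2 ∂ν)
      + (a*a*b) * (∫ x, |x - s| ∂ν) ^ 2 := by
  have hFm : Measurable fun q : ℝ × ℝ × ℝ => |q.1 - q.2.1| * |q.1 - q.2.2| := by fun_prop
  have hFE : Measurable fun q : ℝ × ℝ × ℝ => ENNReal.ofReal (|q.1 - q.2.1| * |q.1 - q.2.2|) :=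
    hFm.ennreal_ofReal
  have hFn : ∀ q : ℝ × ℝ × ℝ, 0 ≤ |q.1 - q.2.1| * |q.1 - q.2.2| := fun q =>
    mul_nonneg (abs_nonneg _) (abs_nonneg _)
  rw [integral_eq_lintegral_of_nonneg_ae (ae_of_all _ hFn) hFm.aestronglyMeasurable]
  rw [lint_mix3]
  have t1 : ∫⁻ q, ENNReal.ofReal (|q.1 - q.2.1| * |q.1 - q.2.2|) ∂(ν.prod (ν.prod ν))
      = ENNReal.ofReal (∫ q, |q.1 - q.2.1| * |q.1 - q.2.2| ∂(ν.prod (ν.prod ν))) :=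
    (ofReal_integral_eq_lintegral_ofReal (int_T h2) (ae_of_all _ hFn)).symm
  have t2 : ∫⁻ q, ENNReal.ofReal (|q.1 - q.2.1| * |q.1 - q.2.2|)
        ∂(ν.prod (ν.prod (Measure.dirac s)))
      = ENNReal.ofReal (∫ p : ℝ × ℝ, |p.1 - p.2| * |p.1 - s| ∂(ν.prod ν)) := by
    rw [lint3 _ _ _ _ hFE]
    simp only [lintegral_dirac]
    rw [← lint2 ν ν (fun p => ENNReal.ofReal (|p.1 - p.2| * |p.1 - s|)) (by fun_prop)]
    exact (ofReal_integral_eq_lintegral_ofReal (int_N h2 s)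
      (ae_of_all _ fun p => mul_nonneg (abs_nonneg _) (abs_nonneg _))).symm
  have t3 : ∫⁻ q, ENNReal.ofReal (|q.1 - q.2.1| * |q.1 - q.2.2|)
        ∂(ν.prod ((Measure.dirac s).prod ν))
      = ENNReal.ofReal (∫ p : ℝ × ℝ, |p.1 - p.2| * |p.1 - s| ∂(ν.prod ν)) := by
    rw [lint3 _ _ _ _ hFE]
    simp only [lintegral_dirac]
    rw [← lint2 ν ν (fun p => ENNReal.ofReal (|p.1 - s| * |p.1 - p.2|)) (by fun_prop)]
    have hint' : Integrable (fun p : ℝ × ℝ => |p.1 - s| * |p.1 - p.2|) (ν.prod ν) :=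
      (int_N h2 s).congr (ae_of_all _ fun p => mul_comm _ _)
    rw [← ofReal_integral_eq_lintegral_ofReal hint'
      (ae_of_all _ fun p => mul_nonneg (abs_nonneg _) (abs_nonneg _))]
    congr 1
    exact integral_congr_ae (ae_of_all _ fun p => mul_comm _ _)
  have t4 : ∫⁻ q, ENNReal.ofReal (|q.1 - q.2.1| * |q.1 - q.2.2|)
        ∂(ν.prod ((Measure.dirac s).prod (Measure.dirac s)))
      = ENNReal.ofReal (∫ x, |x - s| ^ 2 ∂ν) := by
    rw [lint3 _ _ _ _ hFE]
    simp only [lintegral_dirac]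
    have hint' : Integrable (fun x : ℝ => |x - s| * |x - s|) ν :=
      (int_abs_sq_sub h2 s).congr (ae_of_all _ fun x => by simp only []; rw [pow_two])
    rw [← ofReal_integral_eq_lintegral_ofReal hint'
      (ae_of_all _ fun x => mul_nonneg (abs_nonneg _) (abs_nonneg _))]
    congr 1
    exact integral_congr_ae (ae_of_all _ fun x => (pow_two _).symm)
  have t5 : ∫⁻ q, ENNReal.ofReal (|q.1 - q.2.1| * |q.1 - q.2.2|)
        ∂((Measure.dirac s).prod (ν.prod ν))
      = ENNReal.ofReal ((∫ x, |x - s| ∂ν) ^ 2) := by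
    rw [lint3 _ _ _ _ hFE]
    simp only [lintegral_dirac]
    rw [← lint2 ν ν (fun p => ENNReal.ofReal (|s - p.1| * |s - p.2|)) (by fun_prop)]
    have hint' : Integrable (fun p : ℝ × ℝ => |s - p.1| * |s - p.2|) (ν.prod ν) :=
      ((int_abs_sub h2 s).mul_prod (int_abs_sub h2 s)).congr
        (ae_of_all _ fun p => by simp only []; rw [abs_sub_comm p.1 s, abs_sub_comm p.2 s])
    rw [← ofReal_integral_eq_lintegral_ofReal hint'
      (ae_of_all _ fun p => mul_nonneg (abs_nonneg _) (abs_nonneg _))]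
    congr 1
    calc ∫ p : ℝ × ℝ, |s - p.1| * |s - p.2| ∂(ν.prod ν)
        = ∫ p : ℝ × ℝ, |p.1 - s| * |p.2 - s| ∂(ν.prod ν) :=
          integral_congr_ae (ae_of_all _ fun p => by
            simp only []; rw [abs_sub_comm p.1 s, abs_sub_comm p.2 s])
      _ = (∫ x, |x - s| ∂ν) * (∫ y, |y - s| ∂ν) :=
          integral_prod_mul (f := fun x : ℝ => |x - s|) (g := fun y : ℝ => |y - s|)
      _ = (∫ x, |x - s| ∂ν) ^ 2 := (sq _).symm
  have t6 : ∫⁻ q, ENNReal.ofReal (|q.1 - q.2.1| * |q.1 - q.2.2|)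
        ∂((Measure.dirac s).prod (ν.prod (Measure.dirac s))) = 0 := by
    rw [lint3 _ _ _ _ hFE]
    simp [lintegral_dirac, sub_self, abs_zero, mul_zero]
  have t7 : ∫⁻ q, ENNReal.ofReal (|q.1 - q.2.1| * |q.1 - q.2.2|)
        ∂((Measure.dirac s).prod ((Measure.dirac s).prod ν)) = 0 := by
    rw [lint3 _ _ _ _ hFE]
    simp [lintegral_dirac, sub_self, abs_zero, mul_zero]
  have t8 : ∫⁻ q, ENNReal.ofReal (|q.1 - q.2.1| * |q.1 - q.2.2|)
        ∂((Measure.dirac s).prod ((Measure.dirac s).prod (Measure.dirac s))) = 0 := by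
    rw [lint3 _ _ _ _ hFE]
    simp [lintegral_dirac, sub_self, abs_zero, mul_zero]
  rw [t1, t2, t3, t4, t5, t6, t7, t8,
    toReal_mix3 a b _ _ _ _ ha hb (integral_nonneg hFn)
      (integral_nonneg fun p => mul_nonneg (abs_nonneg _) (abs_nonneg _))
      (sq_nonneg _) (integral_nonneg fun x => sq_nonneg _)]
  ring


lemma realbound (a b V2 W T t u n sm c₁ c₂ K' : ℝ) (ha : 0 < a) (hb : 0 < b)
    (hab : a + b = 1)
    (hc₁ : c₁ = min (2*a^2*b) (4*a^2*b^2)) (hc₂ : c₂ = 4*a^2*b*Real.sqrt V2)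
    (hK' : K' = a^2*V2 + a^4*W^2 - 2*a^3*T - c₂^2/(2*c₁))
    (hV20 : 0 ≤ V2) (hW0 : 0 ≤ W) (ht0 : 0 ≤ t) (hu0 : 0 ≤ u) (hu2 : u^2 ≤ t)
    (hsm0 : 0 ≤ sm) (hmt : sm ≤ t) (hn : n ≤ Real.sqrt V2 * Real.sqrt t) :
    K' + c₁/2 * sm ≤ (a*a*V2 + 2*(a*b)*t) + (a*a*W + 2*(a*b)*u)^2
      - 2*(a*a*a*T + 2*(a*a*b)*n + (a*b*b)*t + (a*a*b)*u^2) := by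
  have hc₁0 : 0 < c₁ := by rw [hc₁]; exact lt_min (by positivity) (by positivity)
  have hc₂0 : 0 ≤ c₂ := by rw [hc₂]; positivity
  have hD : c₂^2/(2*c₁) * (2*c₁) = c₂^2 := by field_simp
  have hsq : Real.sqrt t ^ 2 = t := Real.sq_sqrt ht0
  have keysq : c₁^2 * Real.sqrt t ^ 2 = c₁^2 * t := by rw [hsq]
  have h1 : c₂ * Real.sqrt t ≤ c₁/2 * t + c₂^2/(2*c₁) := by
    have h2c1 : (0:ℝ) < 2*c₁ := by linarith
    have e : 2*c₁*(c₁/2*t + c₂^2/(2*c₁)) = c₁^2*t + c₂^2 := by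
      field_simp
    have h1' : 2*c₁*(c₂*Real.sqrt t) ≤ c₁^2*t + c₂^2 := by
      nlinarith [sq_nonneg (c₁*Real.sqrt t - c₂), keysq]
    refine le_of_mul_le_mul_left ?_ h2c1
    rw [e]; exact h1'
  have expand : (a*a*V2 + 2*(a*b)*t) + (a*a*W + 2*(a*b)*u)^2
      - 2*(a*a*a*T + 2*(a*a*b)*n + (a*b*b)*t + (a*a*b)*u^2)
      = (a^2*V2 + a^4*W^2 - 2*a^3*T) + 2*a^2*b*t + 4*a^3*b*W*u + 2*a^2*b*(2*b-1)*u^2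
        - 4*a^2*b*n := by
    have hae : a = 1 - b := by linarith
    rw [hae]; ring
  have hWu : 0 ≤ 4*a^3*b*W*u := by positivity
  have hnc : 4*a^2*b*n ≤ c₂ * Real.sqrt t := by
    calc 4*a^2*b*n ≤ 4*a^2*b*(Real.sqrt V2 * Real.sqrt t) :=
          mul_le_mul_of_nonneg_left hn (by positivity)
      _ = c₂ * Real.sqrt t := by rw [hc₂]; ring
  have hmain : c₁ * t - c₂ * Real.sqrt t ≤
      2*a^2*b*t + 4*a^3*b*W*u + 2*a^2*b*(2*b-1)*u^2 - 4*a^2*b*n := by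
    rcases le_or_gt (2*b-1) 0 with hcase | hcase
    · have haux : 0 ≤ 2*a^2*b*(t - u^2) := mul_nonneg (by positivity) (sub_nonneg.2 hu2)
      have h5 : 2*a^2*b*(2*b-1)*t ≤ 2*a^2*b*(2*b-1)*u^2 := by nlinarith [haux, hcase]
      have h6 : c₁ * t ≤ 4*a^2*b^2 * t := by
        rw [hc₁]; exact mul_le_mul_of_nonneg_right (min_le_right _ _) ht0
      linarith [h5, h6, hnc, hWu]
    · have h6 : c₁ * t ≤ 2*a^2*b * t := by
        rw [hc₁]; exact mul_le_mul_of_nonneg_right (min_le_left _ _) ht0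
      have h7 : 0 ≤ 2*a^2*b*(2*b-1)*u^2 := by
        have : (0:ℝ) ≤ 2*b-1 := hcase.le
        positivity
      linarith [h6, h7, hnc, hWu]
  have hmt' : c₁/2 * sm ≤ c₁/2 * t := mul_le_mul_of_nonneg_left hmt (by positivity)
  linarith [expand, h1, hmain, hmt']

end Stmt10Aux


open Stmt10Aux

/-- Asymptotic breakdown value of the distance variance is zero: for any
fixed contamination fraction `ε ∈ (0,1)`, contaminating with a point mass at
`s` makes the distance variance explode as `s → ∞`. -/
theorem stmt10 (ν : Measure ℝ) [IsProbabilityMeasure ν]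
    (h2 : Integrable (fun x => x ^ 2) ν)
    (hnd : ¬ ∃ c : ℝ, ν = Measure.dirac c)
    (ε : ℝ) (hε0 : 0 < ε) (hε1 : ε < 1) :
    let dVar : Measure ℝ → ℝ := fun G =>
      (∫ p, |p.1 - p.2| ^ 2 ∂(G.prod G))
        + (∫ p, |p.1 - p.2| ∂(G.prod G)) ^ 2
        - 2 * ∫ q, |q.1 - q.2.1| * |q.1 - q.2.2| ∂(G.prod (G.prod G))
    Tendsto (fun s : ℝ =>
        dVar (ENNReal.ofReal (1 - ε) • ν + ENNReal.ofReal ε • Measure.dirac s))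
      atTop atTop := by
  intro dVar
  simp only [dVar]
  have hx : Integrable (fun x : ℝ => x) ν := int_id h2
  have ha : (0:ℝ) < 1 - ε := by linarith
  have ha' : (0:ℝ) ≤ 1 - ε := ha.le
  have hb' : (0:ℝ) ≤ ε := hε0.le
  -- global constants
  obtain ⟨V2, hV2⟩ : ∃ r, r = ∫ p : ℝ × ℝ, |p.1 - p.2| ^ 2 ∂(ν.prod ν) := ⟨_, rfl⟩
  obtain ⟨W, hW⟩ : ∃ r, r = ∫ p : ℝ × ℝ, |p.1 - p.2| ∂(ν.prod ν) := ⟨_, rfl⟩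
  obtain ⟨T, hT⟩ : ∃ r, r = ∫ q : ℝ × ℝ × ℝ, |q.1 - q.2.1| * |q.1 - q.2.2|
      ∂(ν.prod (ν.prod ν)) := ⟨_, rfl⟩
  obtain ⟨m, hm⟩ : ∃ r, r = ∫ x, x ∂ν := ⟨_, rfl⟩
  have hV20 : 0 ≤ V2 := hV2 ▸ integral_nonneg fun p => sq_nonneg _
  have hW0 : 0 ≤ W := hW ▸ integral_nonneg fun p => abs_nonneg _
  obtain ⟨c₁, hc₁⟩ : ∃ r, r = min (2*(1-ε)^2*ε) (4*(1-ε)^2*ε^2) := ⟨_, rfl⟩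
  obtain ⟨c₂, hc₂⟩ : ∃ r, r = 4*(1-ε)^2*ε*Real.sqrt V2 := ⟨_, rfl⟩
  obtain ⟨K', hK'⟩ : ∃ r, r = (1-ε)^2*V2 + (1-ε)^4*W^2 - 2*(1-ε)^3*T - c₂^2/(2*c₁) :=
    ⟨_, rfl⟩
  have hc₁0 : 0 < c₁ := by rw [hc₁]; exact lt_min (by positivity) (by positivity)
  -- the diverging minorant
  have hpoly : Tendsto (fun s : ℝ => K' + c₁/2 * (s - m)^2) atTop atTop := by
    have h1 : Tendsto (fun s : ℝ => s - m) atTop atTop := by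
      simpa [sub_eq_add_neg] using
        tendsto_atTop_add_const_right atTop (-m) (tendsto_id (α := ℝ))
    have h2' : Tendsto (fun s : ℝ => (s - m)^2) atTop atTop := by
      simpa [Function.comp_def] using
        (tendsto_pow_atTop (by norm_num : (2:ℕ) ≠ 0)).comp h1
    exact tendsto_atTop_add_const_left atTop K'
      (Tendsto.const_mul_atTop (half_pos hc₁0) h2')
  refine tendsto_atTop_mono (fun s => ?_) hpoly
  -- pointwise bound
  have eA := mix2_integral (ν := ν) s (fun p : ℝ × ℝ => |p.1 - p.2| ^ 2) (by fun_prop)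
    (fun p => sq_nonneg _) (fun x y => by simp [abs_sub_comm])
    (by simp) (int_abs_sq2 h2) (int_abs_sq_sub h2 s) (1-ε) ε ha' hb'
  have eB := mix2_integral (ν := ν) s (fun p : ℝ × ℝ => |p.1 - p.2|) (by fun_prop)
    (fun p => abs_nonneg _) (fun x y => by simp [abs_sub_comm])
    (by simp) (int_abs2 h2) (int_abs_sub h2 s) (1-ε) ε ha' hb'
  have eC := mix3_integral (ν := ν) h2 s (1-ε) ε ha' hb'
  simp only [eA, eB, eC]
  -- abbreviations for the s-dependent integrals
  obtain ⟨t, ht⟩ : ∃ r, r = ∫ x, |x - s| ^ 2 ∂ν := ⟨_, rfl⟩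
  obtain ⟨u, hu⟩ : ∃ r, r = ∫ x, |x - s| ∂ν := ⟨_, rfl⟩
  obtain ⟨n, hn⟩ : ∃ r, r = ∫ p : ℝ × ℝ, |p.1 - p.2| * |p.1 - s| ∂(ν.prod ν) := ⟨_, rfl⟩
  rw [← hV2, ← hW, ← hT, ← ht, ← hu, ← hn]
  have ht0 : 0 ≤ t := ht ▸ integral_nonneg fun x => sq_nonneg _
  have hu0 : 0 ≤ u := hu ▸ integral_nonneg fun x => abs_nonneg _
  -- Cauchy-Schwarz facts
  have hut : u ≤ Real.sqrt t := by
    have h := myCS (μ := ν) (fun x => |x - s|) (fun _ => 1)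
      ((measurable_id.sub measurable_const).abs.aestronglyMeasurable)
      aestronglyMeasurable_const (fun x => abs_nonneg _)
      (fun x => zero_le_one) (int_abs_sq_sub h2 s) (by simpa using integrable_const (1:ℝ))
    have e1 : ∫ x, |x - s| * 1 ∂ν = u := by rw [hu]; simp
    have e2 : ∫ x, (1:ℝ)^2 ∂ν = 1 := by simp
    rw [e1, e2, Real.sqrt_one, mul_one, ← ht] at h
    exact h
  have hu2 : u^2 ≤ t := by
    calc u^2 ≤ Real.sqrt t ^ 2 := pow_le_pow_left₀ hu0 hut 2
      _ = t := Real.sq_sqrt ht0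
  have hmt : (s - m)^2 ≤ t := by
    have him : ∫ x, (x - s) ∂ν = m - s := by
      rw [integral_sub hx (integrable_const s), hm]
      simp
    have habs : |m - s| ≤ u := by
      rw [← him, hu]
      calc |∫ x, (x - s) ∂ν| = ‖∫ x, (x - s) ∂ν‖ := (Real.norm_eq_abs _).symm
        _ ≤ ∫ x, ‖x - s‖ ∂ν := norm_integral_le_integral_norm _
        _ = ∫ x, |x - s| ∂ν := by simp [Real.norm_eq_abs]
    calc (s - m)^2 = |m - s|^2 := by rw [← sq_abs, abs_sub_comm]
      _ ≤ u^2 := pow_le_pow_left₀ (abs_nonneg _) habs 2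
      _ ≤ t := hu2
  have hnCS : n ≤ Real.sqrt V2 * Real.sqrt t := by
    have h := myCS (μ := ν.prod ν) (fun p => |p.1 - p.2|) (fun p => |p.1 - s|)
      ((measurable_fst.sub measurable_snd).abs.aestronglyMeasurable)
      ((measurable_fst.sub measurable_const).abs.aestronglyMeasurable)
      (fun p => abs_nonneg _) (fun p => abs_nonneg _)
      (int_abs_sq2 h2) (int_fst' (int_abs_sq_sub h2 s) ν)
    have e : ∫ p : ℝ × ℝ, |p.1 - s| ^ 2 ∂(ν.prod ν) = t := by
      rw [ht]
      have := integral_prod_mul (μ := ν) (ν := ν) (f := fun x : ℝ => |x - s| ^ 2)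
        (g := fun _ : ℝ => (1:ℝ))
      simpa using this
    rw [e, ← hV2, ← hn] at h
    exact h
  exact realbound (1-ε) ε V2 W T t u n ((s-m)^2) c₁ c₂ K' ha hε0 (by ring)
    hc₁ hc₂ hK' hV20 hW0 ht0 hu0 hu2 (sq_nonneg _) hmt hnCS
end

section
/- The asymptotic breakdown value of the distance covariance is zero: for every ε ∈ (0,1) and bivariate distribution F with finite second moments and non-degenerate marginals, letting F_ε = (1-ε)F + εΔ_{(s,s)}, dCov(F_ε) → ∞ as s → ∞. -/
open MeasureTheory Filter

set_option linter.unusedSectionVars false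
namespace StmtAux

open ENNReal

lemma l2mul {α : Type*} [MeasurableSpace α] {m : Measure α} {f g : α → ℝ}
    (hf : MemLp f 2 m) (hg : MemLp g 2 m) : Integrable (fun x => f x * g x) m := by
  rw [← memLp_one_iff_integrable]
  have h : (1 : ℝ≥0∞) / 1 = 1 / 2 + 1 / 2 := by
    rw [ENNReal.div_add_div_same, one_div_one, one_add_one_eq_two]
    exact (ENNReal.div_self two_ne_zero (by norm_num)).symm
  exact (hg.smul hf : MemLp (f • g) 1 m)

lemma abs_sub_le_add (x s : ℝ) (hs : 0 ≤ s) : |x - s| ≤ s + |x| :=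
  abs_le.mpr ⟨by linarith [neg_abs_le x], by linarith [le_abs_self x]⟩

lemma abs_sub_le_add' (x y : ℝ) : |x - y| ≤ |x| + |y| :=
  abs_le.mpr ⟨by linarith [neg_abs_le x, le_abs_self y], by linarith [le_abs_self x, neg_abs_le y]⟩

lemma sub_abs_le_abs_sub (x s : ℝ) (hs : 0 ≤ s) : s - |x| ≤ |x - s| := by
  rw [abs_sub_comm]
  calc s - |x| = |s| - |x| := by rw [abs_of_nonneg hs]
  _ ≤ |s - x| := abs_sub_abs_le_abs_sub s x

lemma key_lower (x y s : ℝ) (hs : 0 ≤ s) : s^2 - s*(|x|+|y|) ≤ |x - s| * |y - s| := by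
  rcases le_or_gt s (|x|+|y|) with h | h
  · have h0 : s^2 - s*(|x|+|y|) ≤ 0 := by nlinarith
    exact h0.trans (mul_nonneg (abs_nonneg _) (abs_nonneg _))
  · have hx : s - |x| ≤ |x - s| := sub_abs_le_abs_sub x s hs
    have hy : s - |y| ≤ |y - s| := sub_abs_le_abs_sub y s hs
    have h1 : 0 ≤ s - |x| := by linarith [abs_nonneg y]
    have h2 : 0 ≤ s - |y| := by linarith [abs_nonneg x]
    calc s^2 - s*(|x|+|y|) ≤ (s - |x|) * (s - |y|) := by
          nlinarith [mul_nonneg (abs_nonneg x) (abs_nonneg y)]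
    _ ≤ |x - s| * |y - s| := mul_le_mul hx hy h2 (h1.trans hx)

lemma key_upper (x y s : ℝ) (hs : 0 ≤ s) : |s - x| * |s - y| ≤ s*s + s*(|x|+|y|) + |x| * |y| := by
  have h1 : |s - x| ≤ s + |x| := by rw [abs_sub_comm]; exact abs_sub_le_add x s hs
  have h2 : |s - y| ≤ s + |y| := by rw [abs_sub_comm]; exact abs_sub_le_add y s hs
  have h3 : (0:ℝ) ≤ s + |y| := by linarith [abs_nonneg y]
  have := mul_le_mul h1 h2 (abs_nonneg _) (by linarith [abs_nonneg x])
  nlinarith [abs_nonneg x, abs_nonneg y]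

lemma tendsto_of_quad {F : ℝ → ℝ} {c β γ : ℝ} (hc : 0 < c)
    (h : ∀ᶠ s in atTop, c*s^2 + β*s + γ ≤ F s) : Tendsto F atTop atTop := by
  refine tendsto_atTop_mono' atTop ?_ tendsto_id
  filter_upwards [h, eventually_ge_atTop (1:ℝ), eventually_ge_atTop ((1+|β|+|γ|)/c)]
    with s h1 h2 h3
  have h4 : 1 + |β| + |γ| ≤ c * s := by
    rw [div_le_iff₀ hc] at h3; linarith
  have h5 : (0:ℝ) ≤ s := by linarith
  have h6 : -|β| * s ≤ β * s := mul_le_mul_of_nonneg_right (neg_abs_le β) h5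
  have h7 : |γ| * 1 ≤ |γ| * s := mul_le_mul_of_nonneg_left h2 (abs_nonneg γ)
  have h8 : (1 + |β| + |γ|) * s ≤ (c*s) * s := mul_le_mul_of_nonneg_right h4 h5
  have h9 : -|γ| ≤ γ := neg_abs_le γ
  have : c*s^2 + β*s + γ ≥ s := by nlinarith
  simpa using this.trans h1

section Measures

variable {α β γ : Type*} [MeasurableSpace α] [MeasurableSpace β] [MeasurableSpace γ]

lemma smul_prod' (c : ℝ≥0∞) (μ : Measure α) (ν : Measure β) [SFinite μ] [SFinite ν] :
    (c • μ).prod ν = c • (μ.prod ν) := by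
  ext s hs
  rw [Measure.prod_apply hs, Measure.smul_apply, Measure.prod_apply hs,
    lintegral_smul_measure, smul_eq_mul]

lemma prod_smul' (c : ℝ≥0∞) (μ : Measure α) (ν : Measure β) [SFinite μ] [SFinite ν] :
    μ.prod (c • ν) = c • (μ.prod ν) := by
  ext s hs
  rw [Measure.prod_apply hs, Measure.smul_apply, Measure.prod_apply hs, smul_eq_mul,
    ← lintegral_const_mul'' _ (measurable_measure_prodMk_left hs).aemeasurable]
  simp

lemma mix_prod_mix (A B : ℝ≥0∞) (μ : Measure α) (δ : Measure α) [SFinite μ] [SFinite δ] :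
    (A • μ + B • δ).prod (A • μ + B • δ) =
      (A*A) • μ.prod μ + (A*B) • δ.prod μ + (B*A) • μ.prod δ + (B*B) • δ.prod δ := by
  rw [Measure.prod_add, Measure.add_prod, Measure.add_prod]
  simp only [smul_prod', prod_smul', smul_smul]
  abel

lemma mix_prod_mix3 (A B : ℝ≥0∞) (μ : Measure α) (δ : Measure α) [SFinite μ] [SFinite δ] :
    (A • μ + B • δ).prod ((A • μ + B • δ).prod (A • μ + B • δ)) =
      (A*A*A) • μ.prod (μ.prod μ) + (A*A*B) • δ.prod (μ.prod μ)
      + (A*B*A) • μ.prod (δ.prod μ) + (A*B*B) • δ.prod (δ.prod μ)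
      + (B*A*A) • μ.prod (μ.prod δ) + (B*A*B) • δ.prod (μ.prod δ)
      + (B*B*A) • μ.prod (δ.prod δ) + (B*B*B) • δ.prod (δ.prod δ) := by
  rw [mix_prod_mix, Measure.prod_add, Measure.prod_add, Measure.prod_add, Measure.add_prod,
    Measure.add_prod, Measure.add_prod, Measure.add_prod]
  simp only [smul_prod', prod_smul', smul_smul]
  abel

lemma int_four {m1 m2 m3 m4 : Measure α} {c1 c2 c3 c4 : ℝ≥0∞}
    (h1 : c1 ≠ ∞) (h2 : c2 ≠ ∞) (h3 : c3 ≠ ∞) (h4 : c4 ≠ ∞) {f : α → ℝ}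
    (i1 : Integrable f m1) (i2 : Integrable f m2) (i3 : Integrable f m3) (i4 : Integrable f m4) :
    ∫ x, f x ∂(c1 • m1 + c2 • m2 + c3 • m3 + c4 • m4)
      = c1.toReal * ∫ x, f x ∂m1 + c2.toReal * ∫ x, f x ∂m2
        + c3.toReal * ∫ x, f x ∂m3 + c4.toReal * ∫ x, f x ∂m4 := by
  rw [integral_add_measure (((i1.smul_measure h1).add_measure (i2.smul_measure h2)).add_measure
        (i3.smul_measure h3)) (i4.smul_measure h4),
    integral_add_measure ((i1.smul_measure h1).add_measure (i2.smul_measure h2))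
      (i3.smul_measure h3),
    integral_add_measure (i1.smul_measure h1) (i2.smul_measure h2),
    integral_smul_measure, integral_smul_measure, integral_smul_measure, integral_smul_measure]
  simp [smul_eq_mul]

lemma int_eight {m1 m2 m3 m4 m5 m6 m7 m8 : Measure α} {c1 c2 c3 c4 c5 c6 c7 c8 : ℝ≥0∞}
    (h1 : c1 ≠ ∞) (h2 : c2 ≠ ∞) (h3 : c3 ≠ ∞) (h4 : c4 ≠ ∞)
    (h5 : c5 ≠ ∞) (h6 : c6 ≠ ∞) (h7 : c7 ≠ ∞) (h8 : c8 ≠ ∞) {f : α → ℝ}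
    (i1 : Integrable f m1) (i2 : Integrable f m2) (i3 : Integrable f m3) (i4 : Integrable f m4)
    (i5 : Integrable f m5) (i6 : Integrable f m6) (i7 : Integrable f m7) (i8 : Integrable f m8) :
    ∫ x, f x ∂(c1 • m1 + c2 • m2 + c3 • m3 + c4 • m4 + c5 • m5 + c6 • m6 + c7 • m7 + c8 • m8)
      = c1.toReal * ∫ x, f x ∂m1 + c2.toReal * ∫ x, f x ∂m2
        + c3.toReal * ∫ x, f x ∂m3 + c4.toReal * ∫ x, f x ∂m4
        + c5.toReal * ∫ x, f x ∂m5 + c6.toReal * ∫ x, f x ∂m6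
        + c7.toReal * ∫ x, f x ∂m7 + c8.toReal * ∫ x, f x ∂m8 := by
  have I1234 : Integrable f (c1 • m1 + c2 • m2 + c3 • m3 + c4 • m4) :=
    ((i1.smul_measure h1).add_measure (i2.smul_measure h2)).add_measure
      (i3.smul_measure h3) |>.add_measure (i4.smul_measure h4)
  rw [show c1 • m1 + c2 • m2 + c3 • m3 + c4 • m4 + c5 • m5 + c6 • m6 + c7 • m7 + c8 • m8
      = (c1 • m1 + c2 • m2 + c3 • m3 + c4 • m4) + (c5 • m5 + c6 • m6 + c7 • m7 + c8 • m8) by abel,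
    integral_add_measure I1234 (((i5.smul_measure h5).add_measure (i6.smul_measure h6)).add_measure
      (i7.smul_measure h7) |>.add_measure (i8.smul_measure h8)),
    int_four h1 h2 h3 h4 i1 i2 i3 i4, int_four h5 h6 h7 h8 i5 i6 i7 i8]
  ring

end Measures

open Measure

variable (μ : Measure (ℝ × ℝ)) [IsProbabilityMeasure μ]

lemma expand2 (A B : ℝ≥0∞) (hA : A ≠ ∞) (hB : B ≠ ∞) (z : ℝ × ℝ)
    {f : (ℝ × ℝ) × (ℝ × ℝ) → ℝ} (hfc : Continuous f)
    (i1 : Integrable f (μ.prod μ))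
    (i2 : Integrable (fun p => f (z, p)) μ)
    (i3 : Integrable (fun p => f (p, z)) μ) :
    ∫ q, f q ∂((A • μ + B • dirac z).prod (A • μ + B • dirac z))
      = (A*A).toReal * ∫ q, f q ∂(μ.prod μ)
        + (A*B).toReal * ∫ p, f (z, p) ∂μ
        + (B*A).toReal * ∫ p, f (p, z) ∂μ
        + (B*B).toReal * f (z, z) := by
  have e2 : (dirac z).prod μ = μ.map (Prod.mk z) := dirac_prod z
  have e3 : μ.prod (dirac z) = μ.map (fun x => (x, z)) := prod_dirac z
  have m2 : Measurable (Prod.mk z : (ℝ × ℝ) → (ℝ × ℝ) × (ℝ × ℝ)) := measurable_prodMk_left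
  have m3 : Measurable (fun x : ℝ × ℝ => (x, z)) := measurable_prodMk_right
  have I2 : Integrable f ((dirac z).prod μ) := by
    rw [e2]
    exact (integrable_map_measure hfc.aestronglyMeasurable m2.aemeasurable).2 i2
  have I3 : Integrable f (μ.prod (dirac z)) := by
    rw [e3]
    exact (integrable_map_measure hfc.aestronglyMeasurable m3.aemeasurable).2 i3
  have I4 : Integrable f ((dirac z).prod (dirac z)) := by
    rw [dirac_prod_dirac]
    exact (integrable_const (f (z, z))).congr (ae_eq_dirac f).symm
  rw [mix_prod_mix, int_four (ENNReal.mul_ne_top hA hA) (ENNReal.mul_ne_top hA hB)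
    (ENNReal.mul_ne_top hB hA) (ENNReal.mul_ne_top hB hB) i1 I2 I3 I4]
  rw [e2, e3, dirac_prod_dirac, integral_map m2.aemeasurable hfc.aestronglyMeasurable,
    integral_map m3.aemeasurable hfc.aestronglyMeasurable,
    integral_dirac f (z, z)]

lemma expand3 (A B : ℝ≥0∞) (hA : A ≠ ∞) (hB : B ≠ ∞) (z : ℝ × ℝ)
    {f : (ℝ × ℝ) × ((ℝ × ℝ) × (ℝ × ℝ)) → ℝ} (hfc : Continuous f)
    (i1 : Integrable f (μ.prod (μ.prod μ)))
    (i2 : Integrable (fun q => f (z, q)) (μ.prod μ))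
    (i3 : Integrable (fun q : (ℝ × ℝ) × (ℝ × ℝ) => f (q.1, (z, q.2))) (μ.prod μ))
    (i4 : Integrable (fun p => f (z, (z, p))) μ)
    (i5 : Integrable (fun q : (ℝ × ℝ) × (ℝ × ℝ) => f (q.1, (q.2, z))) (μ.prod μ))
    (i6 : Integrable (fun p => f (z, (p, z))) μ)
    (i7 : Integrable (fun p => f (p, (z, z))) μ) :
    ∫ q, f q ∂((A • μ + B • dirac z).prod
        ((A • μ + B • dirac z).prod (A • μ + B • dirac z)))
      = (A*A*A).toReal * ∫ q, f q ∂(μ.prod (μ.prod μ))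
        + (A*A*B).toReal * ∫ q, f (z, q) ∂(μ.prod μ)
        + (A*B*A).toReal * ∫ q, f (q.1, (z, q.2)) ∂(μ.prod μ)
        + (A*B*B).toReal * ∫ p, f (z, (z, p)) ∂μ
        + (B*A*A).toReal * ∫ q, f (q.1, (q.2, z)) ∂(μ.prod μ)
        + (B*A*B).toReal * ∫ p, f (z, (p, z)) ∂μ
        + (B*B*A).toReal * ∫ p, f (p, (z, z)) ∂μ
        + (B*B*B).toReal * f (z, (z, z)) := by
  have mzl : Measurable (Prod.mk z : (ℝ × ℝ) → (ℝ × ℝ) × (ℝ × ℝ)) := measurable_prodMk_left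
  have mzr : Measurable (fun x : ℝ × ℝ => (x, z)) := measurable_prodMk_right
  have e2 : (dirac z).prod (μ.prod μ) = (μ.prod μ).map (Prod.mk z) := dirac_prod z
  have e3 : μ.prod ((dirac z).prod μ) = (μ.prod μ).map (Prod.map id (Prod.mk z)) := by
    rw [dirac_prod, ← Measure.map_id (μ := μ), map_prod_map _ _ measurable_id mzl,
      Measure.map_id]
  have e4 : (dirac z).prod ((dirac z).prod μ) = μ.map (fun p => (z, (z, p))) := by
    rw [dirac_prod, dirac_prod, Measure.map_map measurable_prodMk_left mzl]
    rfl
  have e5 : μ.prod (μ.prod (dirac z)) = (μ.prod μ).map (Prod.map id (fun x => (x, z))) := by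
    rw [prod_dirac, ← Measure.map_id (μ := μ), map_prod_map _ _ measurable_id mzr,
      Measure.map_id]
  have e6 : (dirac z).prod (μ.prod (dirac z)) = μ.map (fun p => (z, (p, z))) := by
    rw [prod_dirac, dirac_prod, Measure.map_map measurable_prodMk_left mzr]
    rfl
  have e7 : μ.prod ((dirac z).prod (dirac z)) = μ.map (fun x => (x, (z, z))) := by
    rw [dirac_prod_dirac, prod_dirac]
  have e8 : (dirac z).prod ((dirac z).prod (dirac z)) = dirac (z, (z, z)) := by
    rw [dirac_prod_dirac, dirac_prod_dirac]
  have hm3 : Measurable (Prod.map (id : ℝ × ℝ → ℝ × ℝ) (Prod.mk z)) :=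
    measurable_id.prodMap mzl
  have hm4 : Measurable (fun p : ℝ × ℝ => (z, (z, p))) := measurable_prodMk_left.comp mzl
  have hm5 : Measurable (Prod.map (id : ℝ × ℝ → ℝ × ℝ) (fun x : ℝ × ℝ => (x, z))) :=
    measurable_id.prodMap mzr
  have hm6 : Measurable (fun p : ℝ × ℝ => (z, (p, z))) := measurable_prodMk_left.comp mzr
  have hm7 : Measurable (fun x : ℝ × ℝ => (x, (z, z))) := measurable_prodMk_right
  have I2 : Integrable f ((dirac z).prod (μ.prod μ)) := by
    rw [e2]
    exact (integrable_map_measure hfc.aestronglyMeasurable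
      measurable_prodMk_left.aemeasurable).2 i2
  have I3 : Integrable f (μ.prod ((dirac z).prod μ)) := by
    rw [e3]; exact (integrable_map_measure hfc.aestronglyMeasurable hm3.aemeasurable).2 i3
  have I4 : Integrable f ((dirac z).prod ((dirac z).prod μ)) := by
    rw [e4]; exact (integrable_map_measure hfc.aestronglyMeasurable hm4.aemeasurable).2 i4
  have I5 : Integrable f (μ.prod (μ.prod (dirac z))) := by
    rw [e5]; exact (integrable_map_measure hfc.aestronglyMeasurable hm5.aemeasurable).2 i5
  have I6 : Integrable f ((dirac z).prod (μ.prod (dirac z))) := by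
    rw [e6]; exact (integrable_map_measure hfc.aestronglyMeasurable hm6.aemeasurable).2 i6
  have I7 : Integrable f (μ.prod ((dirac z).prod (dirac z))) := by
    rw [e7]; exact (integrable_map_measure hfc.aestronglyMeasurable hm7.aemeasurable).2 i7
  have I8 : Integrable f ((dirac z).prod ((dirac z).prod (dirac z))) := by
    rw [e8]; exact (integrable_const (f (z, (z, z)))).congr (ae_eq_dirac f).symm
  rw [mix_prod_mix3, int_eight (by finiteness) (by finiteness) (by finiteness) (by finiteness)
    (by finiteness) (by finiteness) (by finiteness) (by finiteness) i1 I2 I3 I4 I5 I6 I7 I8,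
    e2, e3, e4, e5, e6, e7, e8,
    integral_map (measurable_prodMk_left).aemeasurable hfc.aestronglyMeasurable,
    integral_map hm3.aemeasurable hfc.aestronglyMeasurable,
    integral_map hm4.aemeasurable hfc.aestronglyMeasurable,
    integral_map hm5.aemeasurable hfc.aestronglyMeasurable,
    integral_map hm6.aemeasurable hfc.aestronglyMeasurable,
    integral_map hm7.aemeasurable hfc.aestronglyMeasurable,
    integral_dirac f (z, (z, z))]
  rfl

section Main

variable {μ : Measure (ℝ × ℝ)} [IsProbabilityMeasure μ]

-- quantities
noncomputable def I1 (μ : Measure (ℝ × ℝ)) : ℝ :=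
  ∫ q : (ℝ × ℝ) × (ℝ × ℝ), |q.1.1 - q.2.1| * |q.1.2 - q.2.2| ∂(μ.prod μ)
noncomputable def I2d (μ : Measure (ℝ × ℝ)) : ℝ :=
  ∫ q : (ℝ × ℝ) × (ℝ × ℝ), |q.1.1 - q.2.1| ∂(μ.prod μ)
noncomputable def I3d (μ : Measure (ℝ × ℝ)) : ℝ :=
  ∫ q : (ℝ × ℝ) × (ℝ × ℝ), |q.1.2 - q.2.2| ∂(μ.prod μ)
noncomputable def Jf (μ : Measure (ℝ × ℝ)) : ℝ :=
  ∫ q : (ℝ × ℝ) × ((ℝ × ℝ) × (ℝ × ℝ)), |q.1.1 - q.2.1.1| * |q.1.2 - q.2.2.2|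
    ∂(μ.prod (μ.prod μ))
noncomputable def Ms (μ : Measure (ℝ × ℝ)) (s : ℝ) : ℝ := ∫ p : ℝ × ℝ, |p.1 - s| * |p.2 - s| ∂μ
noncomputable def mXs (μ : Measure (ℝ × ℝ)) (s : ℝ) : ℝ := ∫ p : ℝ × ℝ, |p.1 - s| ∂μ
noncomputable def mYs (μ : Measure (ℝ × ℝ)) (s : ℝ) : ℝ := ∫ p : ℝ × ℝ, |p.2 - s| ∂μ
noncomputable def Ns (μ : Measure (ℝ × ℝ)) (s : ℝ) : ℝ :=
  ∫ q : (ℝ × ℝ) × (ℝ × ℝ), |s - q.1.1| * |s - q.2.2| ∂(μ.prod μ)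
noncomputable def PXs (μ : Measure (ℝ × ℝ)) (s : ℝ) : ℝ :=
  ∫ q : (ℝ × ℝ) × (ℝ × ℝ), |q.1.1 - q.2.1| * |q.1.2 - s| ∂(μ.prod μ)
noncomputable def PYs (μ : Measure (ℝ × ℝ)) (s : ℝ) : ℝ :=
  ∫ q : (ℝ × ℝ) × (ℝ × ℝ), |q.1.1 - s| * |q.1.2 - q.2.2| ∂(μ.prod μ)
noncomputable def cXc (μ : Measure (ℝ × ℝ)) : ℝ := ∫ p : ℝ × ℝ, |p.1| ∂μ
noncomputable def cYc (μ : Measure (ℝ × ℝ)) : ℝ := ∫ p : ℝ × ℝ, |p.2| ∂μ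
noncomputable def nAc (μ : Measure (ℝ × ℝ)) : ℝ :=
  ∫ q : (ℝ × ℝ) × (ℝ × ℝ), (|q.1.1| + |q.2.2|) ∂(μ.prod μ)
noncomputable def nBc (μ : Measure (ℝ × ℝ)) : ℝ :=
  ∫ q : (ℝ × ℝ) × (ℝ × ℝ), |q.1.1| * |q.2.2| ∂(μ.prod μ)
noncomputable def pAc (μ : Measure (ℝ × ℝ)) : ℝ :=
  ∫ q : (ℝ × ℝ) × (ℝ × ℝ), (|q.1.1| + |q.2.1|) ∂(μ.prod μ)
noncomputable def pBc (μ : Measure (ℝ × ℝ)) : ℝ :=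
  ∫ q : (ℝ × ℝ) × (ℝ × ℝ), (|q.1.1| + |q.2.1|) * |q.1.2| ∂(μ.prod μ)
noncomputable def qAc (μ : Measure (ℝ × ℝ)) : ℝ :=
  ∫ q : (ℝ × ℝ) × (ℝ × ℝ), (|q.1.2| + |q.2.2|) ∂(μ.prod μ)
noncomputable def qBc (μ : Measure (ℝ × ℝ)) : ℝ :=
  ∫ q : (ℝ × ℝ) × (ℝ × ℝ), |q.1.1| * (|q.1.2| + |q.2.2|) ∂(μ.prod μ)

variable (hX : MemLp (fun p : ℝ × ℝ => p.1) 2 μ) (hY : MemLp (fun p : ℝ × ℝ => p.2) 2 μ)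

section Proj
include hX hY

lemma x11 : MemLp (fun q : (ℝ × ℝ) × (ℝ × ℝ) => q.1.1) 2 (μ.prod μ) :=
  hX.comp_measurePreserving ⟨measurable_fst, by simp⟩
lemma x21 : MemLp (fun q : (ℝ × ℝ) × (ℝ × ℝ) => q.2.1) 2 (μ.prod μ) :=
  hX.comp_measurePreserving ⟨measurable_snd, by simp⟩
lemma y12 : MemLp (fun q : (ℝ × ℝ) × (ℝ × ℝ) => q.1.2) 2 (μ.prod μ) :=
  hY.comp_measurePreserving ⟨measurable_fst, by simp⟩
lemma y22 : MemLp (fun q : (ℝ × ℝ) × (ℝ × ℝ) => q.2.2) 2 (μ.prod μ) :=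
  hY.comp_measurePreserving ⟨measurable_snd, by simp⟩
lemma u1m : MemLp (fun q : (ℝ × ℝ) × ((ℝ × ℝ) × (ℝ × ℝ)) => q.1.1) 2 (μ.prod (μ.prod μ)) :=
  hX.comp_measurePreserving ⟨measurable_fst, by simp⟩
lemma u2m : MemLp (fun q : (ℝ × ℝ) × ((ℝ × ℝ) × (ℝ × ℝ)) => q.2.1.1) 2 (μ.prod (μ.prod μ)) :=
  hX.comp_measurePreserving
    ((⟨measurable_fst, by simp⟩ : MeasurePreserving Prod.fst (μ.prod μ) μ).comp
      (⟨measurable_snd, by simp⟩ : MeasurePreserving Prod.snd (μ.prod (μ.prod μ)) (μ.prod μ)))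
lemma v1m : MemLp (fun q : (ℝ × ℝ) × ((ℝ × ℝ) × (ℝ × ℝ)) => q.1.2) 2 (μ.prod (μ.prod μ)) :=
  hY.comp_measurePreserving ⟨measurable_fst, by simp⟩
lemma v2m : MemLp (fun q : (ℝ × ℝ) × ((ℝ × ℝ) × (ℝ × ℝ)) => q.2.2.2) 2 (μ.prod (μ.prod μ)) :=
  hY.comp_measurePreserving
    ((⟨measurable_snd, by simp⟩ : MeasurePreserving Prod.snd (μ.prod μ) μ).comp
      (⟨measurable_snd, by simp⟩ : MeasurePreserving Prod.snd (μ.prod (μ.prod μ)) (μ.prod μ)))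

-- integrability
lemma int_f1 : Integrable (fun q : (ℝ × ℝ) × (ℝ × ℝ) => |q.1.1 - q.2.1| * |q.1.2 - q.2.2|)
    (μ.prod μ) := l2mul (((x11 hX hY).sub (x21 hX hY)).abs) (((y12 hX hY).sub (y22 hX hY)).abs)
lemma int_f2 : Integrable (fun q : (ℝ × ℝ) × (ℝ × ℝ) => |q.1.1 - q.2.1|) (μ.prod μ) :=
  (((x11 hX hY).sub (x21 hX hY)).abs).integrable one_le_two
lemma int_f3 : Integrable (fun q : (ℝ × ℝ) × (ℝ × ℝ) => |q.1.2 - q.2.2|) (μ.prod μ) :=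
  (((y12 hX hY).sub (y22 hX hY)).abs).integrable one_le_two
lemma int_g : Integrable
    (fun q : (ℝ × ℝ) × ((ℝ × ℝ) × (ℝ × ℝ)) => |q.1.1 - q.2.1.1| * |q.1.2 - q.2.2.2|)
    (μ.prod (μ.prod μ)) :=
  l2mul (((u1m hX hY).sub (u2m hX hY)).abs) (((v1m hX hY).sub (v2m hX hY)).abs)
lemma int_M (s : ℝ) : Integrable (fun p : ℝ × ℝ => |p.1 - s| * |p.2 - s|) μ :=
  l2mul ((hX.sub (memLp_const s)).abs) ((hY.sub (memLp_const s)).abs)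
lemma int_M' (s : ℝ) : Integrable (fun p : ℝ × ℝ => |s - p.1| * |s - p.2|) μ :=
  l2mul (((memLp_const s).sub hX).abs) (((memLp_const s).sub hY).abs)
lemma int_aX (s : ℝ) : Integrable (fun p : ℝ × ℝ => |p.1 - s|) μ :=
  ((hX.sub (memLp_const s)).abs).integrable one_le_two
lemma int_aX' (s : ℝ) : Integrable (fun p : ℝ × ℝ => |s - p.1|) μ :=
  (((memLp_const s).sub hX).abs).integrable one_le_two
lemma int_aY (s : ℝ) : Integrable (fun p : ℝ × ℝ => |p.2 - s|) μ :=
  ((hY.sub (memLp_const s)).abs).integrable one_le_two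
lemma int_aY' (s : ℝ) : Integrable (fun p : ℝ × ℝ => |s - p.2|) μ :=
  (((memLp_const s).sub hY).abs).integrable one_le_two
lemma int_N (s : ℝ) : Integrable (fun q : (ℝ × ℝ) × (ℝ × ℝ) => |s - q.1.1| * |s - q.2.2|)
    (μ.prod μ) :=
  l2mul (((memLp_const s).sub (x11 hX hY)).abs) (((memLp_const s).sub (y22 hX hY)).abs)
lemma int_PX (s : ℝ) : Integrable
    (fun q : (ℝ × ℝ) × (ℝ × ℝ) => |q.1.1 - q.2.1| * |q.1.2 - s|) (μ.prod μ) :=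
  l2mul (((x11 hX hY).sub (x21 hX hY)).abs) (((y12 hX hY).sub (memLp_const s)).abs)
lemma int_PY (s : ℝ) : Integrable
    (fun q : (ℝ × ℝ) × (ℝ × ℝ) => |q.1.1 - s| * |q.1.2 - q.2.2|) (μ.prod μ) :=
  l2mul (((x11 hX hY).sub (memLp_const s)).abs) (((y12 hX hY).sub (y22 hX hY)).abs)
lemma int_nAf : Integrable (fun q : (ℝ × ℝ) × (ℝ × ℝ) => |q.1.1| + |q.2.2|) (μ.prod μ) :=
  ((x11 hX hY).abs.integrable one_le_two).add ((y22 hX hY).abs.integrable one_le_two)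
lemma int_nBf : Integrable (fun q : (ℝ × ℝ) × (ℝ × ℝ) => |q.1.1| * |q.2.2|) (μ.prod μ) :=
  l2mul (x11 hX hY).abs (y22 hX hY).abs
lemma int_pAf : Integrable (fun q : (ℝ × ℝ) × (ℝ × ℝ) => |q.1.1| + |q.2.1|) (μ.prod μ) :=
  ((x11 hX hY).abs.integrable one_le_two).add ((x21 hX hY).abs.integrable one_le_two)
lemma int_pBf : Integrable (fun q : (ℝ × ℝ) × (ℝ × ℝ) => (|q.1.1| + |q.2.1|) * |q.1.2|)
    (μ.prod μ) := l2mul ((x11 hX hY).abs.add (x21 hX hY).abs) (y12 hX hY).abs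
lemma int_qAf : Integrable (fun q : (ℝ × ℝ) × (ℝ × ℝ) => |q.1.2| + |q.2.2|) (μ.prod μ) :=
  ((y12 hX hY).abs.integrable one_le_two).add ((y22 hX hY).abs.integrable one_le_two)
lemma int_qBf : Integrable (fun q : (ℝ × ℝ) × (ℝ × ℝ) => |q.1.1| * (|q.1.2| + |q.2.2|))
    (μ.prod μ) := l2mul (x11 hX hY).abs ((y12 hX hY).abs.add (y22 hX hY).abs)
lemma int_absX : Integrable (fun p : ℝ × ℝ => |p.1|) μ := hX.abs.integrable one_le_two
lemma int_absY : Integrable (fun p : ℝ × ℝ => |p.2|) μ := hY.abs.integrable one_le_two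


-- expansions of the contaminated integrals
lemma eT1 (ε : ℝ) (hε0 : 0 < ε) (hε1 : ε < 1) (s : ℝ) :
    (∫ q, |q.1.1 - q.2.1| * |q.1.2 - q.2.2|
        ∂((ENNReal.ofReal (1 - ε) • μ + ENNReal.ofReal ε • dirac (s, s)).prod
          (ENNReal.ofReal (1 - ε) • μ + ENNReal.ofReal ε • dirac (s, s))))
      = (1-ε)*(1-ε)*I1 μ + 2*((1-ε)*ε)*Ms μ s := by
  have ha : (0:ℝ) ≤ 1 - ε := by linarith
  rw [expand2 μ _ _ ENNReal.ofReal_ne_top ENNReal.ofReal_ne_top (s, s)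
      (f := fun q : (ℝ × ℝ) × (ℝ × ℝ) => |q.1.1 - q.2.1| * |q.1.2 - q.2.2|)
      (by fun_prop) (int_f1 hX hY) (int_M' hX hY s) (int_M hX hY s)]
  simp only [ENNReal.toReal_mul, ENNReal.toReal_ofReal ha, ENNReal.toReal_ofReal hε0.le,
    _root_.sub_self, abs_zero, mul_zero, zero_mul, add_zero]
  rw [I1, Ms]
  simp_rw [abs_sub_comm s]
  ring

lemma eT2 (ε : ℝ) (hε0 : 0 < ε) (hε1 : ε < 1) (s : ℝ) :
    (∫ q, |q.1.1 - q.2.1|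
        ∂((ENNReal.ofReal (1 - ε) • μ + ENNReal.ofReal ε • dirac (s, s)).prod
          (ENNReal.ofReal (1 - ε) • μ + ENNReal.ofReal ε • dirac (s, s))))
      = (1-ε)*(1-ε)*I2d μ + 2*((1-ε)*ε)*mXs μ s := by
  have ha : (0:ℝ) ≤ 1 - ε := by linarith
  rw [expand2 μ _ _ ENNReal.ofReal_ne_top ENNReal.ofReal_ne_top (s, s)
      (f := fun q : (ℝ × ℝ) × (ℝ × ℝ) => |q.1.1 - q.2.1|)
      (by fun_prop) (int_f2 hX hY) (int_aX' hX hY s) (int_aX hX hY s)]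
  simp only [ENNReal.toReal_mul, ENNReal.toReal_ofReal ha, ENNReal.toReal_ofReal hε0.le,
    _root_.sub_self, abs_zero, mul_zero, zero_mul, add_zero]
  rw [I2d, mXs]
  simp_rw [abs_sub_comm s]
  ring

lemma eT3 (ε : ℝ) (hε0 : 0 < ε) (hε1 : ε < 1) (s : ℝ) :
    (∫ q, |q.1.2 - q.2.2|
        ∂((ENNReal.ofReal (1 - ε) • μ + ENNReal.ofReal ε • dirac (s, s)).prod
          (ENNReal.ofReal (1 - ε) • μ + ENNReal.ofReal ε • dirac (s, s))))
      = (1-ε)*(1-ε)*I3d μ + 2*((1-ε)*ε)*mYs μ s := by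
  have ha : (0:ℝ) ≤ 1 - ε := by linarith
  rw [expand2 μ _ _ ENNReal.ofReal_ne_top ENNReal.ofReal_ne_top (s, s)
      (f := fun q : (ℝ × ℝ) × (ℝ × ℝ) => |q.1.2 - q.2.2|)
      (by fun_prop) (int_f3 hX hY) (int_aY' hX hY s) (int_aY hX hY s)]
  simp only [ENNReal.toReal_mul, ENNReal.toReal_ofReal ha, ENNReal.toReal_ofReal hε0.le,
    _root_.sub_self, abs_zero, mul_zero, zero_mul, add_zero]
  rw [I3d, mYs]
  simp_rw [abs_sub_comm s]
  ring

lemma eT4 (ε : ℝ) (hε0 : 0 < ε) (hε1 : ε < 1) (s : ℝ) :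
    (∫ q, |q.1.1 - q.2.1.1| * |q.1.2 - q.2.2.2|
        ∂((ENNReal.ofReal (1 - ε) • μ + ENNReal.ofReal ε • dirac (s, s)).prod
          ((ENNReal.ofReal (1 - ε) • μ + ENNReal.ofReal ε • dirac (s, s)).prod
            (ENNReal.ofReal (1 - ε) • μ + ENNReal.ofReal ε • dirac (s, s)))))
      = (1-ε)*(1-ε)*(1-ε)*Jf μ + (1-ε)*(1-ε)*ε*Ns μ s + (1-ε)*(1-ε)*ε*PYs μ s
        + (1-ε)*(1-ε)*ε*PXs μ s + (1-ε)*ε*ε*Ms μ s := by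
  have ha : (0:ℝ) ≤ 1 - ε := by linarith
  have i4 : Integrable (fun p : ℝ × ℝ => |s - s| * |s - p.2|) μ :=
    (int_aY' hX hY s).const_mul _
  have i6 : Integrable (fun p : ℝ × ℝ => |s - p.1| * |s - s|) μ :=
    (int_aX' hX hY s).mul_const _
  rw [expand3 μ _ _ ENNReal.ofReal_ne_top ENNReal.ofReal_ne_top (s, s)
      (f := fun q : (ℝ × ℝ) × ((ℝ × ℝ) × (ℝ × ℝ)) => |q.1.1 - q.2.1.1| * |q.1.2 - q.2.2.2|)
      (by fun_prop) (int_g hX hY) (int_N hX hY s) (int_PY hX hY s) i4 (int_PX hX hY s) i6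
      (int_M hX hY s)]
  simp only [ENNReal.toReal_mul, ENNReal.toReal_ofReal ha, ENNReal.toReal_ofReal hε0.le,
    _root_.sub_self, abs_zero, mul_zero, zero_mul, add_zero, integral_zero]
  rw [Jf, Ns, PYs, PXs, Ms]
  ring

-- bounds
lemma Ms_lb (s : ℝ) (hs : 0 ≤ s) : s^2 - s*(cXc μ + cYc μ) ≤ Ms μ s := by
  have hg : Integrable (fun p : ℝ × ℝ => s * (|p.1| + |p.2|)) μ := by
    exact ((int_absX hX hY).add (int_absY hX hY)).const_mul s
  have heq : s^2 - s*(cXc μ + cYc μ) = ∫ p : ℝ × ℝ, (s^2 - s*(|p.1| + |p.2|)) ∂μ := by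
    rw [integral_sub (integrable_const _) hg, integral_const, integral_const_mul,
      integral_add (int_absX hX hY) (int_absY hX hY)]
    simp [cXc, cYc]
  rw [heq, Ms]
  exact integral_mono (by exact (integrable_const _).sub hg)
    (int_M hX hY s) (fun p => key_lower p.1 p.2 s hs)

lemma mXs_lb (s : ℝ) (hs : 0 ≤ s) : s - cXc μ ≤ mXs μ s := by
  have heq : s - cXc μ = ∫ p : ℝ × ℝ, (s - |p.1|) ∂μ := by
    rw [integral_sub (integrable_const _) (int_absX hX hY), integral_const]
    simp [cXc]
  rw [heq, mXs]
  exact integral_mono ((integrable_const _).sub (int_absX hX hY)) (int_aX hX hY s)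
    (fun p => sub_abs_le_abs_sub p.1 s hs)

lemma mYs_lb (s : ℝ) (hs : 0 ≤ s) : s - cYc μ ≤ mYs μ s := by
  have heq : s - cYc μ = ∫ p : ℝ × ℝ, (s - |p.2|) ∂μ := by
    rw [integral_sub (integrable_const _) (int_absY hX hY), integral_const]
    simp [cYc]
  rw [heq, mYs]
  exact integral_mono ((integrable_const _).sub (int_absY hX hY)) (int_aY hX hY s)
    (fun p => sub_abs_le_abs_sub p.2 s hs)

lemma Ns_ub (s : ℝ) (hs : 0 ≤ s) : Ns μ s ≤ s*s + s*(nAc μ) + nBc μ := by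
  have hg1 : Integrable (fun q : (ℝ × ℝ) × (ℝ × ℝ) => s * (|q.1.1| + |q.2.2|)) (μ.prod μ) := by
    exact (int_nAf hX hY).const_mul s
  have hg2 : Integrable (fun q : (ℝ × ℝ) × (ℝ × ℝ) => s*s + s * (|q.1.1| + |q.2.2|))
      (μ.prod μ) := by exact (integrable_const _).add hg1
  have heq : s*s + s*(nAc μ) + nBc μ
      = ∫ q : (ℝ × ℝ) × (ℝ × ℝ), (s*s + s*(|q.1.1| + |q.2.2|) + |q.1.1| * |q.2.2|)
        ∂(μ.prod μ) := by
    rw [integral_add hg2 (int_nBf hX hY), integral_add (integrable_const _) hg1,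
      integral_const, integral_const_mul]
    simp [nAc, nBc]
  rw [heq, Ns]
  exact integral_mono (int_N hX hY s) (by exact hg2.add (int_nBf hX hY))
    (fun q => key_upper q.1.1 q.2.2 s hs)

lemma PXs_ub (s : ℝ) (hs : 0 ≤ s) : PXs μ s ≤ s*(pAc μ) + pBc μ := by
  have hg1 : Integrable (fun q : (ℝ × ℝ) × (ℝ × ℝ) => s * (|q.1.1| + |q.2.1|)) (μ.prod μ) := by
    exact (int_pAf hX hY).const_mul s
  have heq : s*(pAc μ) + pBc μ
      = ∫ q : (ℝ × ℝ) × (ℝ × ℝ), (s*(|q.1.1| + |q.2.1|) + (|q.1.1| + |q.2.1|) * |q.1.2|)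
        ∂(μ.prod μ) := by
    rw [integral_add hg1 (int_pBf hX hY), integral_const_mul]
    simp [pAc, pBc]
  rw [heq, PXs]
  refine integral_mono (int_PX hX hY s) (by exact hg1.add (int_pBf hX hY)) (fun q => ?_)
  have h1 : |q.1.1 - q.2.1| ≤ |q.1.1| + |q.2.1| := abs_sub_le_add' _ _
  have h2 : |q.1.2 - s| ≤ s + |q.1.2| := abs_sub_le_add _ _ hs
  have := mul_le_mul h1 h2 (abs_nonneg _) (by positivity)
  nlinarith [abs_nonneg q.1.1, abs_nonneg q.2.1, abs_nonneg q.1.2]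

lemma PYs_ub (s : ℝ) (hs : 0 ≤ s) : PYs μ s ≤ s*(qAc μ) + qBc μ := by
  have hg1 : Integrable (fun q : (ℝ × ℝ) × (ℝ × ℝ) => s * (|q.1.2| + |q.2.2|)) (μ.prod μ) := by
    exact (int_qAf hX hY).const_mul s
  have heq : s*(qAc μ) + qBc μ
      = ∫ q : (ℝ × ℝ) × (ℝ × ℝ), (s*(|q.1.2| + |q.2.2|) + |q.1.1| * (|q.1.2| + |q.2.2|))
        ∂(μ.prod μ) := by
    rw [integral_add hg1 (int_qBf hX hY), integral_const_mul]
    simp [qAc, qBc]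
  rw [heq, PYs]
  refine integral_mono (int_PY hX hY s) (by exact hg1.add (int_qBf hX hY)) (fun q => ?_)
  have h1 : |q.1.1 - s| ≤ s + |q.1.1| := abs_sub_le_add _ _ hs
  have h2 : |q.1.2 - q.2.2| ≤ |q.1.2| + |q.2.2| := abs_sub_le_add' _ _
  have := mul_le_mul h1 h2 (abs_nonneg _) (by positivity)
  nlinarith [abs_nonneg q.1.1, abs_nonneg q.1.2, abs_nonneg q.2.2]

end Proj

lemma I1_nonneg : 0 ≤ I1 μ :=
  integral_nonneg (fun q => mul_nonneg (abs_nonneg _) (abs_nonneg _))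
lemma I2d_nonneg : 0 ≤ I2d μ := integral_nonneg (fun q => abs_nonneg _)
lemma I3d_nonneg : 0 ≤ I3d μ := integral_nonneg (fun q => abs_nonneg _)
lemma mXs_nonneg (s : ℝ) : 0 ≤ mXs μ s := integral_nonneg (fun p => abs_nonneg _)
lemma mYs_nonneg (s : ℝ) : 0 ≤ mYs μ s := integral_nonneg (fun p => abs_nonneg _)


include hX hY in
set_option maxHeartbeats 2000000 in
theorem dcov_main (ε : ℝ) (hε0 : 0 < ε) (hε1 : ε < 1) :
    Tendsto (fun s : ℝ =>
      (∫ q, |q.1.1 - q.2.1| * |q.1.2 - q.2.2|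
          ∂((ENNReal.ofReal (1 - ε) • μ + ENNReal.ofReal ε • dirac (s, s)).prod
            (ENNReal.ofReal (1 - ε) • μ + ENNReal.ofReal ε • dirac (s, s))))
        + (∫ q, |q.1.1 - q.2.1|
          ∂((ENNReal.ofReal (1 - ε) • μ + ENNReal.ofReal ε • dirac (s, s)).prod
            (ENNReal.ofReal (1 - ε) • μ + ENNReal.ofReal ε • dirac (s, s))))
            * (∫ q, |q.1.2 - q.2.2|
          ∂((ENNReal.ofReal (1 - ε) • μ + ENNReal.ofReal ε • dirac (s, s)).prod
            (ENNReal.ofReal (1 - ε) • μ + ENNReal.ofReal ε • dirac (s, s))))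
        - 2 * ∫ q, |q.1.1 - q.2.1.1| * |q.1.2 - q.2.2.2|
          ∂((ENNReal.ofReal (1 - ε) • μ + ENNReal.ofReal ε • dirac (s, s)).prod
            ((ENNReal.ofReal (1 - ε) • μ + ENNReal.ofReal ε • dirac (s, s)).prod
              (ENNReal.ofReal (1 - ε) • μ + ENNReal.ofReal ε • dirac (s, s)))))
      atTop atTop := by
  have ha : (0:ℝ) < 1 - ε := by linarith
  have hab : (0:ℝ) ≤ (1-ε)*ε := mul_nonneg ha.le hε0.le
  refine tendsto_of_quad (c := 4*((1-ε)*ε)^2)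
    (β := -(4*((1-ε)*ε)^2)*(cXc μ + cYc μ) - 2*((1-ε)*(1-ε)*ε)*(cXc μ + cYc μ)
          - 2*((1-ε)*(1-ε)*ε)*(nAc μ + pAc μ + qAc μ))
    (γ := 4*((1-ε)*ε)^2*(cXc μ * cYc μ) - 2*((1-ε)*(1-ε)*ε)*(nBc μ + pBc μ + qBc μ)
          - 2*((1-ε)*(1-ε)*(1-ε))*Jf μ)
    (by nlinarith [mul_pos ha hε0]) ?_
  filter_upwards [eventually_ge_atTop (max 1 (max (cXc μ) (cYc μ)))] with s hs
  have hs1 : (1:ℝ) ≤ s := le_trans (le_max_left _ _) hs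
  have hs0 : (0:ℝ) ≤ s := by linarith
  have hsX : cXc μ ≤ s := le_trans ((le_max_left _ _).trans (le_max_right _ _)) hs
  have hsY : cYc μ ≤ s := le_trans ((le_max_right _ _).trans (le_max_right _ _)) hs
  simp only [eT1 hX hY ε hε0 hε1, eT2 hX hY ε hε0 hε1, eT3 hX hY ε hε0 hε1,
    eT4 hX hY ε hε0 hε1]
  have hMl := Ms_lb hX hY s hs0
  have hNu := Ns_ub hX hY s hs0
  have hPXu := PXs_ub hX hY s hs0
  have hPYu := PYs_ub hX hY s hs0
  have hmXl := mXs_lb hX hY s hs0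
  have hmYl := mYs_lb hX hY s hs0
  have fI1 : 0 ≤ (1-ε)*(1-ε)*I1 μ := mul_nonneg (by positivity) (I1_nonneg (μ := μ))
  have hco : (0:ℝ) ≤ 2*((1-ε)*ε) := by nlinarith [hab]
  have e1 : 2*((1-ε)*ε)*(s - cXc μ) ≤ (1-ε)*(1-ε)*I2d μ + 2*((1-ε)*ε)*mXs μ s := by
    nlinarith [mul_nonneg (mul_nonneg ha.le ha.le) (I2d_nonneg (μ := μ)),
      mul_le_mul_of_nonneg_left hmXl hco]
  have e2 : 2*((1-ε)*ε)*(s - cYc μ) ≤ (1-ε)*(1-ε)*I3d μ + 2*((1-ε)*ε)*mYs μ s := by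
    nlinarith [mul_nonneg (mul_nonneg ha.le ha.le) (I3d_nonneg (μ := μ)),
      mul_le_mul_of_nonneg_left hmYl hco]
  have e3 : 0 ≤ 2*((1-ε)*ε)*(s - cYc μ) := mul_nonneg hco (by linarith)
  have e4 : 0 ≤ (1-ε)*(1-ε)*I2d μ + 2*((1-ε)*ε)*mXs μ s :=
    le_trans (mul_nonneg hco (by linarith)) e1
  have hprod := mul_le_mul e1 e2 e3 e4
  have fM : (2*((1-ε)*ε) - 2*((1-ε)*ε*ε)) * (s^2 - s*(cXc μ + cYc μ))
      ≤ (2*((1-ε)*ε) - 2*((1-ε)*ε*ε)) * Ms μ s :=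
    mul_le_mul_of_nonneg_left hMl (by nlinarith [mul_nonneg hab ha.le])
  have fN : 2*((1-ε)*(1-ε)*ε)*Ns μ s ≤ 2*((1-ε)*(1-ε)*ε)*(s*s + s*(nAc μ) + nBc μ) :=
    mul_le_mul_of_nonneg_left hNu (by nlinarith [mul_nonneg (mul_nonneg ha.le ha.le) hε0.le])
  have fPX : 2*((1-ε)*(1-ε)*ε)*PXs μ s ≤ 2*((1-ε)*(1-ε)*ε)*(s*(pAc μ) + pBc μ) :=
    mul_le_mul_of_nonneg_left hPXu (by nlinarith [mul_nonneg (mul_nonneg ha.le ha.le) hε0.le])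
  have fPY : 2*((1-ε)*(1-ε)*ε)*PYs μ s ≤ 2*((1-ε)*(1-ε)*ε)*(s*(qAc μ) + qBc μ) :=
    mul_le_mul_of_nonneg_left hPYu (by nlinarith [mul_nonneg (mul_nonneg ha.le ha.le) hε0.le])
  linarith [hprod, fM, fN, fPX, fPY, fI1]

end Main

end StmtAux

/-- Asymptotic breakdown value of the distance covariance is zero: for any
fixed contamination fraction `ε ∈ (0,1)`, contaminating a bivariate law with
point mass at `(s,s)` makes the distance covariance explode as `s → ∞`. -/
theorem stmt11 (μ : Measure (ℝ × ℝ)) [IsProbabilityMeasure μ]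
    (h1 : Integrable (fun p => p.1 ^ 2) μ)
    (h2 : Integrable (fun p => p.2 ^ 2) μ)
    (hndX : ¬ ∃ c : ℝ, μ.map Prod.fst = Measure.dirac c)
    (hndY : ¬ ∃ c : ℝ, μ.map Prod.snd = Measure.dirac c)
    (ε : ℝ) (hε0 : 0 < ε) (hε1 : ε < 1) :
    let dCov : Measure (ℝ × ℝ) → ℝ := fun G =>
      (∫ q, |q.1.1 - q.2.1| * |q.1.2 - q.2.2| ∂(G.prod G))
        + (∫ q, |q.1.1 - q.2.1| ∂(G.prod G))
            * (∫ q, |q.1.2 - q.2.2| ∂(G.prod G))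
        - 2 * ∫ q, |q.1.1 - q.2.1.1| * |q.1.2 - q.2.2.2| ∂(G.prod (G.prod G))
    Tendsto (fun s : ℝ =>
        dCov (ENNReal.ofReal (1 - ε) • μ
          + ENNReal.ofReal ε • Measure.dirac (s, s)))
      atTop atTop := by
  intro dCov
  have hX : MemLp (fun p : ℝ × ℝ => p.1) 2 μ :=
    (memLp_two_iff_integrable_sq measurable_fst.aestronglyMeasurable).2 h1
  have hY : MemLp (fun p : ℝ × ℝ => p.2) 2 μ :=
    (memLp_two_iff_integrable_sq measurable_snd.aestronglyMeasurable).2 h2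
  exact StmtAux.dcov_main hX hY ε hε0 hε1
end

section
/- The biloop function ψ: ℝ → ℝ², ψ(x) = (u(x), v(x)), where u(x) = c(1+cos(2π tanh(x/c)+π)) for x ≥ 0 and u(x) = -c(1+cos(2π tanh(x/c)-π)) for x < 0, and v(x) = sin(2π tanh(x/c)), with c > 0, is injective. -/
/-! With `a = tanh (x / c) ∈ (-1, 1)`, both coordinates of `ψ x` only depend on the point
`(cos 2πa, sin 2πa)` of the circle and on the sign of `x`. The first coordinate is `≥ 0` exactly
for `x ≥ 0`, so equal images come from the same half-line; there the parameters `a` differ by less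
than one full turn, hence the circle point determines `a`, and `tanh` is injective. -/

open Real

theorem Real.tanh_nonneg_iff {x : ℝ} : 0 ≤ tanh x ↔ 0 ≤ x := by
  rw [tanh_eq_sinh_div_cosh, le_div_iff₀ (cosh_pos x), zero_mul, sinh_nonneg_iff]

theorem Real.cos_two_pi_mul_tanh_lt_one {x : ℝ} (hx : x ≠ 0) : cos (2 * π * tanh x) < 1 := by
  have hθ : 2 * π * tanh x ≠ 0 :=
    mul_ne_zero (by positivity) fun h ↦ hx (tanh_injective (h.trans tanh_zero.symm))
  refine (cos_le_one _).lt_of_ne fun h ↦ hθ ?_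
  refine (cos_eq_one_iff_of_lt_of_lt ?_ ?_).mp h <;>
    nlinarith [pi_pos, neg_one_lt_tanh x, tanh_lt_one x]

theorem Real.abs_tanh_sub_tanh_lt_one {x y : ℝ} (h : 0 ≤ x ↔ 0 ≤ y) :
    |tanh x - tanh y| < 1 := by
  rw [← tanh_nonneg_iff, ← tanh_nonneg_iff (x := y)] at h
  have := neg_one_lt_tanh x; have := tanh_lt_one x
  have := neg_one_lt_tanh y; have := tanh_lt_one y
  rw [abs_lt]; constructor <;> by_cases hx : 0 ≤ tanh x <;> grind

theorem Real.eq_of_cos_sin_two_pi_mul_eq {a b : ℝ} (hcos : cos (2 * π * a) = cos (2 * π * b))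
    (hsin : sin (2 * π * a) = sin (2 * π * b)) (hab : |a - b| < 1) : a = b := by
  obtain ⟨k, hk⟩ := Angle.angle_eq_iff_two_pi_dvd_sub.mp (Angle.cos_sin_inj hcos hsin)
  have hk : a - b = k := by
    rw [← mul_sub] at hk
    exact mul_left_cancel₀ (by positivity) hk
  rw [hk, ← Int.cast_abs, ← Int.cast_one, Int.cast_lt, Int.abs_lt_one_iff] at hab
  simpa [hab, sub_eq_zero] using hk

theorem biloop_fst_nonneg_iff {c : ℝ} (hc : 0 < c) (z : ℝ) :
    0 ≤ (if 0 ≤ z then c * (1 + -cos (2 * π * tanh (z / c)))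
      else -c * (1 + -cos (2 * π * tanh (z / c)))) ↔ 0 ≤ z := by
  split_ifs with hz
  · simp only [hz, iff_true]
    nlinarith [cos_le_one (2 * π * tanh (z / c))]
  · have := cos_two_pi_mul_tanh_lt_one (div_ne_zero (not_le.mp hz).ne hc.ne')
    simp only [hz, iff_false, not_le]
    nlinarith

/-- The biloop function `ψ : ℝ → ℝ²` is injective. -/
theorem stmt12 (c : ℝ) (hc : 0 < c) :
    Function.Injective (fun x : ℝ =>
      ((if 0 ≤ x then c * (1 + Real.cos (2 * π * Real.tanh (x / c) + π))
        else -c * (1 + Real.cos (2 * π * Real.tanh (x / c) - π))),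
       Real.sin (2 * π * Real.tanh (x / c)))) := by
  intro x y h
  obtain ⟨hu, hv⟩ := Prod.mk.inj h
  simp only [cos_add_pi, cos_sub_pi] at hu
  have hxy : 0 ≤ x ↔ 0 ≤ y := by
    rw [← biloop_fst_nonneg_iff hc x, ← biloop_fst_nonneg_iff hc y, hu]
  have hcos : cos (2 * π * tanh (x / c)) = cos (2 * π * tanh (y / c)) := by
    by_cases hx : 0 ≤ x
    · simp only [hx, hxy.mp hx, if_true] at hu
      linarith [mul_left_cancel₀ hc.ne' hu]
    · simp only [hx, mt hxy.mpr hx, if_false] at hu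
      linarith [mul_left_cancel₀ (neg_ne_zero.mpr hc.ne') hu]
  have hdiv : 0 ≤ x / c ↔ 0 ≤ y / c := by rwa [le_div_iff₀ hc, le_div_iff₀ hc, zero_mul]
  have htanh := eq_of_cos_sin_two_pi_mul_eq hcos hv (abs_tanh_sub_tanh_lt_one hdiv)
  exact (div_left_inj' hc.ne').mp (tanh_injective htanh)
end

section
/- For a real random variable X with Var(X) < ∞, Var(|X - s|) → Var(X) as s → +∞. -/
open MeasureTheory ProbabilityTheory Filter

/-- For a square-integrable real random variable,
`Var(|X - s|) → Var(X)` as `s → +∞`. -/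
theorem stmt18 (μ : Measure ℝ) [IsProbabilityMeasure μ]
    (h2 : Integrable (fun x => x ^ 2) μ) :
    Tendsto (fun s : ℝ => variance (fun x => |x - s|) μ) atTop
      (nhds (variance (fun x => x) μ)) := by
  have hX2 : MemLp (fun x : ℝ => x) 2 μ :=
    (memLp_two_iff_integrable_sq aestronglyMeasurable_id).mpr h2
  have hX1 : Integrable (fun x : ℝ => x) μ := hX2.integrable one_le_two
  have habs : Integrable (fun x : ℝ => |x|) μ := hX1.abs
  set m : ℝ := ∫ x, x ∂μ with hm
  set A : ℝ := ∫ x, |x| ∂μ with hA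
  set V2 : ℝ := ∫ x, x ^ 2 ∂μ with hV2
  -- integrability for each s
  have hsubInt : ∀ s : ℝ, Integrable (fun x => x - s) μ := fun s =>
    hX1.sub (integrable_const s)
  have hposInt : ∀ s : ℝ, Integrable (fun x => max (x - s) 0) μ := fun s =>
    (hsubInt s).pos_part
  have habsInt : ∀ s : ℝ, Integrable (fun x => |x - s|) μ := fun s => (hsubInt s).abs
  set P : ℝ → ℝ := fun s => ∫ x, max (x - s) 0 ∂μ with hP
  set M : ℝ → ℝ := fun s => ∫ x, |x - s| ∂μ with hM
  -- key identity: M s = s - m + 2 * P s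
  have hMid : ∀ s : ℝ, M s = s - m + 2 * P s := by
    intro s
    have h1 : ∀ x : ℝ, |x - s| = (s - x) + 2 * max (x - s) 0 := by
      intro x
      rcases le_total x s with h | h
      · rw [abs_of_nonpos (by linarith), max_eq_right (by linarith)]; ring
      · rw [abs_of_nonneg (by linarith), max_eq_left (by linarith)]; ring
    have : M s = ∫ x, ((s - x) + 2 * max (x - s) 0) ∂μ := by
      simp only [hM]; exact integral_congr_ae (Filter.Eventually.of_forall h1)
    have ha : Integrable (fun x => s - x) μ := (integrable_const s).sub hX1
    have hb : Integrable (fun x => 2 * max (x - s) 0) μ := (hposInt s).const_mul 2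
    rw [this, integral_add ha hb, integral_sub (integrable_const s) hX1,
      integral_const_mul, integral_const]
    simp [hP, hm]
  -- P s ≥ 0
  have hPnn : ∀ s : ℝ, 0 ≤ P s := fun s =>
    integral_nonneg fun x => le_max_right _ _
  -- P s ≤ A for s ≥ 0
  have hPle : ∀ s : ℝ, 0 ≤ s → P s ≤ A := by
    intro s hs
    apply integral_mono (hposInt s) habs
    intro x
    rcases le_total x s with h | h
    · simp [max_eq_right (by linarith : x - s ≤ 0), abs_nonneg x]
    · have : x - s ≤ |x| := by
        rcases le_total 0 x with hx | hx
        · rw [abs_of_nonneg hx]; linarith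
        · rw [abs_of_nonpos hx]; linarith
      simp [this, abs_nonneg x]
  -- variance formula
  have hvarX : variance (fun x : ℝ => x) μ = V2 - m ^ 2 := by
    rw [variance_eq_sub hX2]
    simp [hV2, hm]
  have hvar : ∀ s : ℝ, variance (fun x => |x - s|) μ
      = V2 - 2 * s * m + s ^ 2 - (M s) ^ 2 := by
    intro s
    have hmem : MemLp (fun x => |x - s|) 2 μ := (hX2.sub (memLp_const s)).abs
    rw [variance_eq_sub hmem]
    have h1 : ∫ x, ((fun x => |x - s|) ^ 2) x ∂μ = ∫ x, (x ^ 2 - 2 * s * x + s ^ 2) ∂μ := by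
      apply integral_congr_ae (Filter.Eventually.of_forall ?_)
      intro x
      simp [Pi.pow_apply, sq_abs]
      ring
    have ha : Integrable (fun x => x ^ 2 - 2 * s * x) μ := h2.sub (hX1.const_mul (2 * s))
    rw [h1, integral_add ha (integrable_const _),
      integral_sub h2 (hX1.const_mul (2 * s)), integral_const_mul, integral_const]
    simp [hV2, hm, hM]
  -- the error term tends to zero
  set D : ℝ → ℝ := fun s => (M s) ^ 2 - (s - m) ^ 2 with hD
  -- H s = ∫ 2 s max(x-s,0) tends to 0 by dominated convergence
  have hHtend : Tendsto (fun s : ℝ => ∫ x, 2 * s * max (x - s) 0 ∂μ) atTop (nhds 0) := by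
    have := tendsto_integral_filter_of_dominated_convergence (μ := μ)
      (F := fun s : ℝ => fun x : ℝ => 2 * s * max (x - s) 0) (f := fun _ => (0 : ℝ))
      (l := atTop) (fun x => 2 * x ^ 2)
      (Filter.Eventually.of_forall fun s =>
        (((measurable_id.sub_const s).max measurable_const).const_mul
          (2 * s)).aestronglyMeasurable)
      ?_ (h2.const_mul 2) ?_
    · simpa using this
    · filter_upwards [eventually_ge_atTop (1 : ℝ)] with s hs
      apply Filter.Eventually.of_forall
      intro x
      rcases le_total x s with h | h
      · simp [max_eq_right (by linarith : x - s ≤ 0)]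
        positivity
      · rw [max_eq_left (by linarith : (0:ℝ) ≤ x - s), Real.norm_eq_abs,
          abs_of_nonneg (by nlinarith)]
        nlinarith
    · apply Filter.Eventually.of_forall
      intro x
      apply Tendsto.congr' _ tendsto_const_nhds
      filter_upwards [eventually_ge_atTop x] with s hs
      simp [max_eq_right (by linarith : x - s ≤ 0)]
  have hDtend : Tendsto D atTop (nhds 0) := by
    apply squeeze_zero' ?_ ?_ (by simpa using hHtend.const_mul (4 : ℝ))
    · filter_upwards [eventually_ge_atTop m] with s hs
      have := hPnn s
      show 0 ≤ M s ^ 2 - (s - m) ^ 2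
      rw [hMid s]
      nlinarith
    · filter_upwards [eventually_ge_atTop (max 1 (A + |m|))] with s hs
      have hs1 : (1:ℝ) ≤ s := le_trans (le_max_left _ _) hs
      have hs2 : A + |m| ≤ s := le_trans (le_max_right _ _) hs
      have hPA : P s ≤ A := hPle s (by linarith)
      have hPn : 0 ≤ P s := hPnn s
      have hHs : ∫ x, 2 * s * max (x - s) 0 ∂μ = 2 * s * P s := by
        rw [integral_const_mul]
      show M s ^ 2 - (s - m) ^ 2 ≤ 4 * ∫ x, 2 * s * max (x - s) 0 ∂μ
      rw [hMid s, hHs]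
      have hmabs : m ≤ |m| := le_abs_self m
      have hmabs' : -|m| ≤ m := neg_abs_le m
      nlinarith [hPn, hPA, hs1, hs2]
  -- conclude
  have heq : (fun s : ℝ => variance (fun x => |x - s|) μ)
      = fun s => variance (fun x : ℝ => x) μ - D s := by
    funext s
    rw [hvar s, hvarX, hD]
    ring
  rw [heq]
  simpa using tendsto_const_nhds.sub hDtend
end

section
/- Let T_n be the modified trimmed mean of a sorted sample x_{1:n} ≤ ... ≤ x_{n:n}: T_n = (Σ w_i x_{i:n})/(Σ w_i) where w_i = 1/n² for the smallest and largest ⌊n/10⌋ order statistics and w_i = 1 otherwise. Then the finite-sample breakdown value of T_n is 1/n: replacing a single observation by s and letting s → ∞ makes T_n unbounded. -/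
open Filter

/-!
An L-statistic with strictly positive weights gives the outlier `s` a weight of at least
`c = minᵢ wᵢ > 0`, whatever its rank, while the remaining observations contribute a bounded
amount. Hence the statistic is at least `c s / ∑ w - ∑ |xⱼ|`, which tends to infinity.
The modified trimmed mean is such a statistic, since its extreme weights are `1/n² > 0`.
-/

lemma le_sum_mul_update {ι : Type*} [Fintype ι] [DecidableEq ι] (x : ι → ℝ) (i₀ : ι) (s : ℝ)
    (v : ι → ℝ) (hv : ∀ j, 0 ≤ v j) :
    v i₀ * s - (∑ j, v j) * ∑ j, |x j| ≤ ∑ j, v j * Function.update x i₀ s j := by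
  have hvx : ∀ j, 0 ≤ v j * |x j| := fun j => mul_nonneg (hv j) (abs_nonneg _)
  have hrest : -((∑ j, v j) * ∑ j, |x j|) ≤ ∑ j ∈ Finset.univ.erase i₀, v j * x j := calc
    -((∑ j, v j) * ∑ j, |x j|) ≤ -∑ j, v j * |x j| := by
      rw [neg_le_neg_iff, Finset.mul_sum]
      exact Finset.sum_le_sum fun j _ =>
        mul_le_mul_of_nonneg_right (Finset.single_le_sum (fun k _ => hv k) (Finset.mem_univ j))
          (abs_nonneg _)
    _ ≤ -∑ j ∈ Finset.univ.erase i₀, v j * |x j| :=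
      neg_le_neg (Finset.sum_le_sum_of_subset_of_nonneg (Finset.erase_subset _ _)
        fun j _ _ => hvx j)
    _ ≤ ∑ j ∈ Finset.univ.erase i₀, v j * x j := by
      rw [← Finset.sum_neg_distrib]
      exact Finset.sum_le_sum fun j _ => by
        rw [← mul_neg]
        exact mul_le_mul_of_nonneg_left (neg_abs_le _) (hv j)
  have hsplit : ∑ j, v j * Function.update x i₀ s j
      = v i₀ * s + ∑ j ∈ Finset.univ.erase i₀, v j * x j := by
    rw [← Finset.add_sum_erase _ _ (Finset.mem_univ i₀), Function.update_self]
    congr 1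
    exact Finset.sum_congr rfl fun j hj => by
      rw [Function.update_of_ne (Finset.ne_of_mem_erase hj)]
  rw [hsplit]
  linarith

lemma le_sum_mul_perm_update {ι : Type*} [Fintype ι] [DecidableEq ι] (x : ι → ℝ) (i₀ : ι)
    {s c : ℝ} (hs : 0 ≤ s) (w : ι → ℝ) (hc : ∀ i, c ≤ w i) (hw : ∀ i, 0 ≤ w i)
    (σ : Equiv.Perm ι) :
    c * s - (∑ i, w i) * ∑ j, |x j| ≤ ∑ i, w i * Function.update x i₀ s (σ i) := by
  have hperm : ∀ f : ι → ℝ, ∑ i, f i = ∑ j, f (σ.symm j) := fun f =>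
    (Equiv.sum_comp σ.symm f).symm
  rw [hperm w, hperm fun i => w i * Function.update x i₀ s (σ i)]
  simp only [Equiv.apply_symm_apply]
  calc c * s - (∑ j, w (σ.symm j)) * ∑ j, |x j|
      ≤ w (σ.symm i₀) * s - (∑ j, w (σ.symm j)) * ∑ j, |x j| := by
        gcongr
        exact hc _
    _ ≤ _ := le_sum_mul_update x i₀ s _ fun j => hw _

theorem tendsto_sum_mul_sort_update_atTop {n : ℕ} (w : Fin n → ℝ) (hw : ∀ i, 0 < w i)
    (x : Fin n → ℝ) (i₀ : Fin n) :
    Tendsto (fun s : ℝ =>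
      (∑ i, w i * Function.update x i₀ s (Tuple.sort (Function.update x i₀ s) i)) / ∑ i, w i)
      atTop atTop := by
  have : Nonempty (Fin n) := ⟨i₀⟩
  obtain ⟨i₁, -, hi₁⟩ := Finset.exists_min_image Finset.univ w Finset.univ_nonempty
  have hD : 0 < ∑ i, w i := Finset.sum_pos (fun i _ => hw i) Finset.univ_nonempty
  have hbound : ∀ s, 0 ≤ s → w i₁ * s / ∑ i, w i - ∑ j, |x j| ≤
      (∑ i, w i * Function.update x i₀ s (Tuple.sort (Function.update x i₀ s) i)) / ∑ i, w i := by
    intro s hs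
    rw [le_div_iff₀ hD, sub_mul, div_mul_cancel₀ _ hD.ne', mul_comm (∑ j, |x j|)]
    exact le_sum_mul_perm_update x i₀ hs w (fun i => hi₁ i (Finset.mem_univ i))
      (fun i => (hw i).le) _
  refine tendsto_atTop_mono' atTop (eventually_atTop.mpr ⟨0, hbound⟩) ?_
  exact tendsto_atTop_add_const_right _ _
    ((tendsto_id.const_mul_atTop (hw i₁)).atTop_div_const hD)

theorem stmt19_general (n : ℕ) (x : Fin n → ℝ) (i0 : Fin n) :
    let w : Fin n → ℝ := fun i =>
      if (i : ℕ) < n / 10 ∨ n - n / 10 ≤ (i : ℕ) then 1 / (n : ℝ) ^ 2 else 1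
    let T : (Fin n → ℝ) → ℝ := fun z =>
      (∑ i, w i * z (Tuple.sort z i)) / (∑ i, w i)
    Tendsto (fun s : ℝ => T (Function.update x i0 s)) atTop atTop := by
  intro w T
  have hn : (0 : ℝ) < n := Nat.cast_pos.mpr i0.pos
  have hw : ∀ i, 0 < w i := fun i => by
    simp only [w]
    split_ifs <;> positivity
  exact tendsto_sum_mul_sort_update_atTop w hw x i0

/-- The modified trimmed mean, giving weight `1/n²` to the extreme `⌊n/10⌋`
order statistics and weight `1` to the rest, breaks down under a single
outlier: replacing one observation by `s → ∞` makes it unbounded.  Hence its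
finite-sample breakdown value is `1/n`. -/
theorem stmt19 (n : ℕ) (hn : 1 ≤ n) (x : Fin n → ℝ) (i0 : Fin n) :
    let w : Fin n → ℝ := fun i =>
      if (i : ℕ) < n / 10 ∨ n - n / 10 ≤ (i : ℕ) then 1 / (n : ℝ) ^ 2 else 1
    let T : (Fin n → ℝ) → ℝ := fun z =>
      (∑ i, w i * z (Tuple.sort z i)) / (∑ i, w i)
    Tendsto (fun s : ℝ => T (Function.update x i0 s)) atTop atTop :=
  stmt19_general n x i0
end
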